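/- arXiv:2401.16371 — 4 statements merged into one kernel-verified Lean document; each statement's English description precedes it below -/
import Mathlib

section
/- Let 1 ≤ j ≤ n, let E be a j-dimensional linear subspace of ℝ^n, let u_1, u_2 be proper, lower semicontinuous, super-coercive convex functions on ℝ^n, and let λ_1, λ_2 ≥ 0. Then proj_E((λ_1 ⊡ u_1) □ (λ_2 ⊡ u_2)) = (λ_1 ⊡ proj_E u_1) □ (λ_2 ⊡ proj_E u_2), where epi-sum and epi-multiplication on the right are considered with respect to the ambient space E. -/
open Metric MeasureTheory Set
open scoped InnerProductSpace RealInnerProductSpace ENNReal Pointwise NNReal Classical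

noncomputable section

/-- Support function of a convex body. -/
def supportFn {n : ℕ} (K : ConvexBody (EuclideanSpace ℝ (Fin n)))
    (u : EuclideanSpace ℝ (Fin n)) : ℝ :=
  sSup ((fun y => ⟪u, y⟫_ℝ) '' (K : Set (EuclideanSpace ℝ (Fin n))))

/-- Subdifferential of a real-valued function. -/
def subdiff {W : Type*} [NormedAddCommGroup W] [InnerProductSpace ℝ W]
    (w : W → ℝ) (x : W) : Set W :=
  {y | ∀ z, w x + ⟪y, z - x⟫_ℝ ≤ w z}

/-- Monge–Ampère measure (as a set function) of a finite-valued convex function. -/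
def MAfn {n : ℕ} (v : EuclideanSpace ℝ (Fin n) → ℝ) (B : Set (EuclideanSpace ℝ (Fin n))) : ℝ≥0∞ :=
  volume (⋃ b ∈ B, subdiff v b)

/-- The Euclidean unit ball as a convex body. -/
def unitBody (n : ℕ) : ConvexBody (EuclideanSpace ℝ (Fin n)) :=
  ⟨closedBall 0 1, convex_closedBall 0 1, isCompact_closedBall 0 1,
    Metric.nonempty_closedBall.mpr zero_le_one⟩

/-- κ_i, the volume of the i-dimensional unit ball. -/
def kappa (i : ℕ) : ℝ := (volume (closedBall (0 : EuclideanSpace ℝ (Fin i)) 1)).toReal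

/-- segment from origin to a point, as a convex body -/
def segBody {n : ℕ} (e : EuclideanSpace ℝ (Fin n)) : ConvexBody (EuclideanSpace ℝ (Fin n)) :=
  ⟨segment ℝ 0 e, convex_segment 0 e, by
      rw [segment_eq_image ℝ 0 e]
      exact (isCompact_Icc).image (by fun_prop),
    ⟨0, left_mem_segment ℝ 0 e⟩⟩

/-- convex indicator function, with values in EReal -/
def indicatorE {W : Type*} [Zero W] (s : Set W) : W → EReal := fun x => if x ∈ s then (0 : EReal) else ⊤

/-- infimal convolution -/
def infConv {W : Type*} [AddGroup W] (u v : W → EReal) : W → EReal :=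
  fun x => ⨅ y, u (x - y) + v y

/-- epi-multiplication -/
def epiMul {W : Type*} [AddCommGroup W] [Module ℝ W] (lam : ℝ) (u : W → EReal) : W → EReal :=
  if lam = 0 then indicatorE {0} else fun x => (lam : EReal) * u (lam⁻¹ • x)

/-- Legendre--Fenchel conjugate -/
def conj {W : Type*} [NormedAddCommGroup W] [InnerProductSpace ℝ W] (u : W → EReal) : W → EReal :=
  fun x => ⨆ y, ((⟪x, y⟫_ℝ : ℝ) : EReal) - u y

/-- an EReal-valued function is proper -/
def ProperE {W : Type*} (u : W → EReal) : Prop := (∀ x, u x ≠ ⊥) ∧ ∃ x, u x ≠ ⊤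

/-- convexity via the epigraph -/
def ConvexE {W : Type*} [AddCommGroup W] [Module ℝ W] (u : W → EReal) : Prop :=
  Convex ℝ {p : W × ℝ | u p.1 ≤ (p.2 : EReal)}

/-- super-coercive -/
def SuperCoercive {W : Type*} [NormedAddCommGroup W] (u : W → EReal) : Prop :=
  ∀ c : ℝ, ∃ R : ℝ, ∀ x, R ≤ ‖x‖ → ((c * ‖x‖ : ℝ) : EReal) ≤ u x



/-- The projection function of `u` onto the subspace `E`:
`proj_E u (x) = inf_{y ∈ E^⊥} u (x + y)`. -/
def projFn {n : ℕ} (E : Submodule ℝ (EuclideanSpace ℝ (Fin n)))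
    (u : EuclideanSpace ℝ (Fin n) → EReal) : ↥E → EReal :=
  fun x => ⨅ z : ↥Eᗮ, u (↑x + ↑z)

/-! Both operations are computed by minimizing over `Eᗮ`. Epi-multiplication commutes with this
minimization after rescaling the minimizing variable, and infimal convolution does because every
point splits as a sum of components in `E` and `Eᗮ`, so both sides are infima of one family.
The only subtlety is `EReal` arithmetic: a sum of infima is the infimum of the sums only away from
`⊥ + ⊤`, which cannot occur since proper, lower semicontinuous, super-coercive functions (and
their epi-multiples) are bounded below by a real number. -/

namespace EReal

lemma iInf_add_iInf {ι κ : Sort*} {f : ι → EReal} {g : κ → EReal}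
    (h₁ : ⨅ i, f i ≠ ⊥ ∨ ⨅ j, g j ≠ ⊤) (h₂ : ⨅ i, f i ≠ ⊤ ∨ ⨅ j, g j ≠ ⊥) :
    (⨅ i, f i) + ⨅ j, g j = ⨅ i, ⨅ j, f i + g j := by
  refine le_antisymm (le_iInf₂ fun i j => add_le_add (iInf_le f i) (iInf_le g j)) ?_
  refine le_add_of_forall_gt h₁ h₂ fun a ha b hb => ?_
  obtain ⟨i, hi⟩ := iInf_lt_iff.mp ha
  obtain ⟨j, hj⟩ := iInf_lt_iff.mp hb
  exact (iInf₂_le i j).trans (add_le_add hi.le hj.le)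

lemma coe_mul_iInf_of_pos {ι : Sort*} {c : ℝ} (hc : 0 < c) (f : ι → EReal) :
    (c : EReal) * ⨅ i, f i = ⨅ i, (c : EReal) * f i := by
  have hcont : ContinuousAt (fun x : EReal => (c : EReal) * x) (⨅ i, f i) :=
    (continuousAt_mul (.inl (coe_ne_zero.mpr hc.ne')) (.inl (coe_ne_zero.mpr hc.ne'))
      (.inl (coe_ne_bot c)) (.inl (coe_ne_top c))).comp
      (continuous_const.prodMk continuous_id).continuousAt
  exact Monotone.map_iInf_of_continuousAt hcont
    (fun _ _ h => mul_le_mul_of_nonneg_left h (by exact_mod_cast hc.le)) (coe_mul_top_of_pos hc)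

end EReal

lemma SuperCoercive.exists_forall_coe_le {W : Type*} [NormedAddCommGroup W] [ProperSpace W]
    {u : W → EReal} (hsc : SuperCoercive u) (hlsc : LowerSemicontinuous u)
    (hbot : ∀ x, u x ≠ ⊥) : ∃ m : ℝ, ∀ x, (m : EReal) ≤ u x := by
  obtain ⟨R, hR⟩ := hsc 0
  obtain ⟨a, -, ha⟩ := LowerSemicontinuousOn.exists_isMinOn
    (nonempty_closedBall.mpr (abs_nonneg R)) (isCompact_closedBall (0 : W) |R|)
    (hlsc.lowerSemicontinuousOn _)
  obtain ⟨m, -, hm⟩ := EReal.exists_between_coe_real (bot_lt_iff_ne_bot.mpr (hbot a))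
  refine ⟨min m 0, fun x => ?_⟩
  by_cases hx : ‖x‖ ≤ |R|
  · exact (EReal.coe_le_coe_iff.mpr (min_le_left m 0)).trans
      (hm.le.trans (isMinOn_iff.mp ha x (mem_closedBall_zero_iff.mpr hx)))
  · have h := hR x ((le_abs_self R).trans (not_le.mp hx).le)
    rw [zero_mul] at h
    exact (EReal.coe_le_coe_iff.mpr (min_le_right m 0)).trans h

section EpiMul

variable {W : Type*} [AddCommGroup W] [Module ℝ W]

lemma epiMul_zero_left (u : W → EReal) : epiMul 0 u = indicatorE {0} := if_pos rfl

lemma epiMul_of_ne_zero {lam : ℝ} (h : lam ≠ 0) (u : W → EReal) :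
    epiMul lam u = fun x => (lam : EReal) * u (lam⁻¹ • x) := if_neg h

lemma coe_min_mul_le_epiMul {u : W → EReal} {m lam : ℝ} (hm : ∀ x, (m : EReal) ≤ u x)
    (hlam : 0 ≤ lam) (x : W) : ((min (lam * m) 0 : ℝ) : EReal) ≤ epiMul lam u x := by
  rcases hlam.eq_or_lt with rfl | hpos
  · rw [epiMul_zero_left, indicatorE]
    split_ifs
    · exact EReal.coe_le_coe_iff.mpr (min_le_right _ _)
    · exact le_top
  · rw [epiMul_of_ne_zero hpos.ne']
    calc ((min (lam * m) 0 : ℝ) : EReal) ≤ (lam : EReal) * m :=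
          EReal.coe_le_coe_iff.mpr (min_le_left _ _)
      _ ≤ (lam : EReal) * u (lam⁻¹ • x) :=
          mul_le_mul_of_nonneg_left (hm _) (EReal.coe_nonneg.mpr hpos.le)

end EpiMul

section ProjFn

variable {n : ℕ} (E : Submodule ℝ (EuclideanSpace ℝ (Fin n)))

lemma projFn_indicatorE_zero : projFn E (indicatorE {0}) = indicatorE {0} := by
  funext x
  by_cases hx : x = 0
  · subst hx
    refine le_antisymm ((iInf_le _ 0).trans (by simp [indicatorE])) (le_iInf fun z => ?_)
    simp only [indicatorE, mem_singleton_iff, ZeroMemClass.coe_zero, zero_add]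
    split_ifs <;> simp
  · have hsum : ∀ z : ↥Eᗮ, (x : EuclideanSpace ℝ (Fin n)) + z ≠ 0 := fun z h => hx <| by
      have hxz : (x : EuclideanSpace ℝ (Fin n)) ∈ Eᗮ := by
        rw [eq_neg_of_add_eq_zero_left h]
        exact neg_mem z.2
      exact Subtype.ext (Submodule.disjoint_def.mp E.orthogonal_disjoint x x.2 hxz)
    simp [projFn, indicatorE, hx, hsum]

lemma projFn_epiMul (u : EuclideanSpace ℝ (Fin n) → EReal) {lam : ℝ} (hlam : 0 ≤ lam) :
    projFn E (epiMul lam u) = epiMul lam (projFn E u) := by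
  rcases hlam.eq_or_lt with rfl | hpos
  · rw [epiMul_zero_left, epiMul_zero_left, projFn_indicatorE_zero]
  have hne : lam ≠ 0 := hpos.ne'
  funext x
  have hsurj : Function.Surjective fun z : ↥Eᗮ => lam⁻¹ • z := fun z =>
    ⟨lam • z, inv_smul_smul₀ hne z⟩
  simp only [projFn, epiMul_of_ne_zero hne, EReal.coe_mul_iInf_of_pos hpos]
  conv_rhs => rw [← hsurj.iInf_comp]
  simp only [Submodule.coe_smul, smul_add]

lemma projFn_infConv {v w : EuclideanSpace ℝ (Fin n) → EReal} {a b : ℝ}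
    (hv : ∀ x, (a : EReal) ≤ v x) (hw : ∀ x, (b : EReal) ≤ w x) :
    projFn E (infConv v w) = infConv (projFn E v) (projFn E w) := by
  have hne_bot {f : EuclideanSpace ℝ (Fin n) → EReal} {c : ℝ} (hf : ∀ x, (c : EReal) ≤ f x)
      (y : ↥E) : projFn E f y ≠ ⊥ :=
    ((EReal.bot_lt_coe c).trans_le (le_iInf fun _ => hf _)).ne'
  funext x
  have hsplit (e : ↥E) : projFn E v (x - e) + projFn E w e
      = ⨅ (z₁ : ↥Eᗮ) (z₂ : ↥Eᗮ), v (↑(x - e) + ↑z₁) + w (↑e + ↑z₂) :=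
    EReal.iInf_add_iInf (.inl (hne_bot hv _)) (.inr (hne_bot hw _))
  simp only [infConv, hsplit]
  refine le_antisymm (le_iInf fun e => le_iInf₂ fun z₁ z₂ => ?_) (le_iInf₂ fun z y => ?_)
  · refine (iInf₂_le (z₁ + z₂) ((e : EuclideanSpace ℝ (Fin n)) + z₂)).trans_eq ?_
    congr 2
    push_cast
    abel
  · obtain ⟨p, hp, q, hq, rfl⟩ := E.exists_add_mem_mem_orthogonal y
    refine (iInf_le _ ⟨p, hp⟩).trans ((iInf₂_le (z - ⟨q, hq⟩) ⟨q, hq⟩).trans_eq ?_)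
    congr 2
    push_cast
    abel

end ProjFn

theorem projFn_infConv_epiMul_general {n : ℕ}
    (E : Submodule ℝ (EuclideanSpace ℝ (Fin n)))
    (u₁ u₂ : EuclideanSpace ℝ (Fin n) → EReal)
    (h₁proper : ProperE u₁) (h₁lsc : LowerSemicontinuous u₁)
    (h₁sc : SuperCoercive u₁)
    (h₂proper : ProperE u₂) (h₂lsc : LowerSemicontinuous u₂)
    (h₂sc : SuperCoercive u₂)
    (lam₁ lam₂ : ℝ) (hlam₁ : 0 ≤ lam₁) (hlam₂ : 0 ≤ lam₂) :
    projFn E (infConv (epiMul lam₁ u₁) (epiMul lam₂ u₂))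
      = infConv (epiMul lam₁ (projFn E u₁)) (epiMul lam₂ (projFn E u₂)) := by
  obtain ⟨m₁, hm₁⟩ := h₁sc.exists_forall_coe_le h₁lsc h₁proper.1
  obtain ⟨m₂, hm₂⟩ := h₂sc.exists_forall_coe_le h₂lsc h₂proper.1
  rw [← projFn_epiMul E u₁ hlam₁, ← projFn_epiMul E u₂ hlam₂]
  exact projFn_infConv E (coe_min_mul_le_epiMul hm₁ hlam₁) (coe_min_mul_le_epiMul hm₂ hlam₂)

/-- projection onto a subspace commutes with epi-sums of epi-multiples of proper,
lsc, super-coercive convex functions: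
`proj_E((λ₁ ⊡ u₁) □ (λ₂ ⊡ u₂)) = (λ₁ ⊡ proj_E u₁) □ (λ₂ ⊡ proj_E u₂)`. -/
theorem projFn_infConv_epiMul {n j : ℕ} (hj : 1 ≤ j) (hjn : j ≤ n)
    (E : Submodule ℝ (EuclideanSpace ℝ (Fin n))) (hE : Module.finrank ℝ E = j)
    (u₁ u₂ : EuclideanSpace ℝ (Fin n) → EReal)
    (h₁proper : ProperE u₁) (h₁lsc : LowerSemicontinuous u₁) (h₁conv : ConvexE u₁)
    (h₁sc : SuperCoercive u₁)
    (h₂proper : ProperE u₂) (h₂lsc : LowerSemicontinuous u₂) (h₂conv : ConvexE u₂)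
    (h₂sc : SuperCoercive u₂)
    (lam₁ lam₂ : ℝ) (hlam₁ : 0 ≤ lam₁) (hlam₂ : 0 ≤ lam₂) :
    projFn E (infConv (epiMul lam₁ u₁) (epiMul lam₂ u₂))
      = infConv (epiMul lam₁ (projFn E u₁)) (epiMul lam₂ (projFn E u₂)) :=
  projFn_infConv_epiMul_general E u₁ u₂ h₁proper h₁lsc h₁sc h₂proper h₂lsc h₂sc lam₁ lam₂ hlam₁
    hlam₂

end
end

section
/- If K_1, …, K_n are convex bodies in ℝ^n, then the mixed Monge–Ampère measure of their support functions satisfies MA(h_{K_1}, …, h_{K_n}; B) = V(K_1,…,K_n) δ_o(B) for all Borel sets B ⊆ ℝ^n, where V is the mixed volume. In particular, binom(n,j) MA(h_K[j], h_{B^n}[n−j]; B) = κ_{n−j} V_j(K) δ_o(B) for 0 ≤ j ≤ n. -/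
open Metric MeasureTheory Set
open scoped InnerProductSpace RealInnerProductSpace ENNReal Pointwise NNReal Classical

noncomputable section

section Aux

variable {n : ℕ}

/-- set-level support function -/
def hSet (s : Set (EuclideanSpace ℝ (Fin n))) (u : EuclideanSpace ℝ (Fin n)) : ℝ :=
  sSup ((fun y => ⟪u, y⟫_ℝ) '' s)

lemma inner_le_hSet {s : Set (EuclideanSpace ℝ (Fin n))} (hs : IsCompact s)
    {y : EuclideanSpace ℝ (Fin n)} (hy : y ∈ s) (u : EuclideanSpace ℝ (Fin n)) :
    ⟪u, y⟫_ℝ ≤ hSet s u :=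
  le_csSup (hs.image (continuous_const.inner continuous_id)).bddAbove ⟨y, hy, rfl⟩

lemma hSet_le {s : Set (EuclideanSpace ℝ (Fin n))} (hne : s.Nonempty)
    {u : EuclideanSpace ℝ (Fin n)} {a : ℝ}
    (h : ∀ y ∈ s, ⟪u, y⟫_ℝ ≤ a) : hSet s u ≤ a :=
  csSup_le (hne.image _) (by rintro _ ⟨y, hy, rfl⟩; exact h y hy)

lemma hSet_zero {s : Set (EuclideanSpace ℝ (Fin n))} (hne : s.Nonempty) : hSet s 0 = 0 := by
  have h : (fun y : EuclideanSpace ℝ (Fin n) => ⟪(0 : EuclideanSpace ℝ (Fin n)), y⟫_ℝ) '' s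
      = {0} := by
    rw [show (fun y : EuclideanSpace ℝ (Fin n) => ⟪(0 : EuclideanSpace ℝ (Fin n)), y⟫_ℝ)
        = fun _ => (0 : ℝ) from funext fun y => inner_zero_left y]
    exact Set.Nonempty.image_const hne 0
  rw [hSet, h, csSup_singleton]

lemma mem_of_inner_le {s : Set (EuclideanSpace ℝ (Fin n))} (hconv : Convex ℝ s)
    (hcl : IsClosed s) (hne : s.Nonempty) {y : EuclideanSpace ℝ (Fin n)}
    (h : ∀ u : EuclideanSpace ℝ (Fin n), ⟪u, y⟫_ℝ ≤ hSet s u) : y ∈ s := by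
  by_contra hy
  obtain ⟨f, u, hfu, huy⟩ := geometric_hahn_banach_closed_point hconv hcl hy
  set z := (InnerProductSpace.toDual ℝ (EuclideanSpace ℝ (Fin n))).symm f with hz
  have hfz : ∀ x : EuclideanSpace ℝ (Fin n), ⟪z, x⟫_ℝ = f x := fun x =>
    InnerProductSpace.toDual_symm_apply
  have h1 : hSet s z ≤ u := hSet_le hne fun x hx => by rw [hfz x]; exact (hfu x hx).le
  have h2 : f y ≤ u := by
    calc f y = ⟪z, y⟫_ℝ := (hfz y).symm
    _ ≤ hSet s z := h z
    _ ≤ u := h1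
  exact absurd huy (not_lt.2 h2)

lemma hSet_add_le {s : Set (EuclideanSpace ℝ (Fin n))} (hs : IsCompact s) (hne : s.Nonempty)
    (b w : EuclideanSpace ℝ (Fin n)) : hSet s (b + w) ≤ hSet s b + hSet s w :=
  hSet_le hne fun y hy => by
    rw [inner_add_left]
    exact add_le_add (inner_le_hSet hs hy b) (inner_le_hSet hs hy w)

lemma subdiff_hSet_subset {s : Set (EuclideanSpace ℝ (Fin n))} (hconv : Convex ℝ s)
    (hs : IsCompact s) (hne : s.Nonempty) (b : EuclideanSpace ℝ (Fin n)) :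
    subdiff (hSet s) b ⊆ s := by
  intro y hy
  refine mem_of_inner_le hconv hs.isClosed hne fun u => ?_
  have h1 := hy (b + u)
  rw [add_sub_cancel_left] at h1
  have h2 := hSet_add_le hs hne b u
  rw [real_inner_comm]
  linarith

lemma subdiff_hSet_zero {s : Set (EuclideanSpace ℝ (Fin n))} (hconv : Convex ℝ s)
    (hs : IsCompact s) (hne : s.Nonempty) : subdiff (hSet s) 0 = s := by
  apply Set.Subset.antisymm (subdiff_hSet_subset hconv hs hne 0)
  intro y hy z
  rw [hSet_zero hne, sub_zero, zero_add, real_inner_comm]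
  exact inner_le_hSet hs hy z

lemma subdiff_hSet_frontier {s : Set (EuclideanSpace ℝ (Fin n))} (hconv : Convex ℝ s)
    (hs : IsCompact s) (hne : s.Nonempty) {b : EuclideanSpace ℝ (Fin n)} (hb : b ≠ 0) :
    subdiff (hSet s) b ⊆ frontier s := by
  intro y hy
  have hys : y ∈ s := subdiff_hSet_subset hconv hs hne b hy
  have hbmax : hSet s b ≤ ⟪y, b⟫_ℝ := by
    have h0 := hy 0
    rw [hSet_zero hne, zero_sub, inner_neg_right] at h0
    linarith
  rw [hs.isClosed.frontier_eq]
  refine ⟨hys, fun hint => ?_⟩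
  obtain ⟨ε, hε, hball⟩ := Metric.mem_nhds_iff.1 (mem_interior_iff_mem_nhds.1 hint)
  have hbnorm : 0 < ‖b‖ := norm_pos_iff.2 hb
  set t : ℝ := ε / (2 * ‖b‖) with ht
  have htpos : 0 < t := by positivity
  have hpt : y + t • b ∈ s := by
    apply hball
    rw [Metric.mem_ball, dist_eq_norm, add_sub_cancel_left, norm_smul, Real.norm_eq_abs,
      abs_of_pos htpos]
    have hteq : t * ‖b‖ = ε / 2 := by
      rw [ht]; field_simp
    rw [hteq]; linarith
  have hle : ⟪b, y + t • b⟫_ℝ ≤ hSet s b := inner_le_hSet hs hpt b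
  rw [inner_add_right, real_inner_smul_right, real_inner_self_eq_norm_sq] at hle
  rw [real_inner_comm] at hbmax
  nlinarith [mul_pos htpos (mul_pos hbnorm hbnorm)]

lemma MAfn_hSet {s : Set (EuclideanSpace ℝ (Fin n))} (hconv : Convex ℝ s) (hs : IsCompact s)
    (hne : s.Nonempty) {B : Set (EuclideanSpace ℝ (Fin n))} (hB : MeasurableSet B) :
    MAfn (hSet s) B = volume s * Measure.dirac (0 : EuclideanSpace ℝ (Fin n)) B := by
  rw [Measure.dirac_apply' _ hB]
  by_cases h0 : (0 : EuclideanSpace ℝ (Fin n)) ∈ B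
  · rw [Set.indicator_of_mem h0, Pi.one_apply, mul_one, MAfn]
    congr 1
    apply Set.Subset.antisymm
    · exact Set.iUnion₂_subset fun b _ => subdiff_hSet_subset hconv hs hne b
    · intro x hx
      exact Set.mem_biUnion h0 (show x ∈ subdiff (hSet s) 0 by
        rw [subdiff_hSet_zero hconv hs hne]; exact hx)
  · rw [Set.indicator_of_notMem h0, mul_zero, MAfn]
    exact measure_mono_null (Set.iUnion₂_subset fun b hb =>
      subdiff_hSet_frontier hconv hs hne (fun h => h0 (h ▸ hb)))
      (hconv.addHaar_frontier volume)

lemma combo_props (m : ℕ) (lam : Fin m → ℝ)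
    (K : Fin m → ConvexBody (EuclideanSpace ℝ (Fin n))) :
    IsCompact (∑ i, lam i • (K i : Set (EuclideanSpace ℝ (Fin n))))
      ∧ Convex ℝ (∑ i, lam i • (K i : Set (EuclideanSpace ℝ (Fin n))))
      ∧ (∑ i, lam i • (K i : Set (EuclideanSpace ℝ (Fin n)))).Nonempty := by
  classical
  have h0 : (0 : Set (EuclideanSpace ℝ (Fin n))) = {0} := by
    ext x; simp [Set.mem_zero]
  refine Finset.sum_induction _ (fun s => IsCompact s ∧ Convex ℝ s ∧ s.Nonempty)
    (fun a b ha hb => ⟨ha.1.add hb.1, ha.2.1.add hb.2.1, ha.2.2.add hb.2.2⟩)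
    ⟨?_, ?_, ?_⟩ (fun i _ => ⟨(K i).isCompact.smul _, (K i).convex.smul _,
      (K i).nonempty.smul_set⟩)
  · rw [h0]; exact isCompact_singleton
  · rw [h0]; exact convex_singleton 0
  · rw [h0]; exact Set.singleton_nonempty 0

lemma hSet_combo (m : ℕ) (lam : Fin m → ℝ) (hlam : ∀ i, 0 ≤ lam i)
    (K : Fin m → ConvexBody (EuclideanSpace ℝ (Fin n))) (u : EuclideanSpace ℝ (Fin n)) :
    hSet (∑ i, lam i • (K i : Set (EuclideanSpace ℝ (Fin n)))) u
      = ∑ i, lam i * hSet (K i : Set (EuclideanSpace ℝ (Fin n))) u := by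
  obtain ⟨hcomp, hconv, hne⟩ := combo_props m lam K
  apply le_antisymm
  · refine hSet_le hne fun z hz => ?_
    obtain ⟨g, hg, hgz⟩ := (Set.mem_fintype_sum _ z).1 hz
    have hterm : ∀ i, ⟪u, g i⟫_ℝ ≤ lam i * hSet (K i : Set (EuclideanSpace ℝ (Fin n))) u := by
      intro i
      obtain ⟨k, hk, hki⟩ := Set.mem_smul_set.1 (hg i)
      rw [← hki, real_inner_smul_right]
      exact mul_le_mul_of_nonneg_left (inner_le_hSet (K i).isCompact hk u) (hlam i)
    calc ⟪u, z⟫_ℝ = ∑ i, ⟪u, g i⟫_ℝ := by rw [← hgz, inner_sum]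
    _ ≤ ∑ i, lam i * hSet (K i : Set (EuclideanSpace ℝ (Fin n))) u :=
      Finset.sum_le_sum fun i _ => hterm i
  · have hmax : ∀ i : Fin m, ∃ k ∈ (K i : Set (EuclideanSpace ℝ (Fin n))),
        hSet (K i : Set (EuclideanSpace ℝ (Fin n))) u = ⟪u, k⟫_ℝ := by
      intro i
      obtain ⟨k, hk, hkmax⟩ := (K i).isCompact.exists_isMaxOn (K i).nonempty
        ((continuous_const.inner continuous_id :
          Continuous fun y : EuclideanSpace ℝ (Fin n) => ⟪u, y⟫_ℝ).continuousOn)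
      exact ⟨k, hk, le_antisymm (hSet_le (K i).nonempty fun y hy => hkmax hy)
        (inner_le_hSet (K i).isCompact hk u)⟩
    choose g hg hgval using hmax
    have hz : (∑ i, lam i • g i) ∈ ∑ i, lam i • (K i : Set (EuclideanSpace ℝ (Fin n))) :=
      Set.finset_sum_mem_finset_sum _ _ _ fun i _ => Set.smul_mem_smul_set (hg i)
    calc ∑ i, lam i * hSet (K i : Set (EuclideanSpace ℝ (Fin n))) u
        = ⟪u, ∑ i, lam i • g i⟫_ℝ := by
          rw [inner_sum]
          exact Finset.sum_congr rfl fun i _ => by rw [real_inner_smul_right, hgval i]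
    _ ≤ hSet (∑ i, lam i • (K i : Set (EuclideanSpace ℝ (Fin n)))) u :=
      inner_le_hSet hcomp hz u

lemma supportFn_convexOn (K : ConvexBody (EuclideanSpace ℝ (Fin n))) :
    ConvexOn ℝ Set.univ (supportFn K) := by
  refine ⟨convex_univ, fun x _ y _ a b ha hb hab => ?_⟩
  simp only [smul_eq_mul]
  show hSet (K : Set (EuclideanSpace ℝ (Fin n))) (a • x + b • y)
    ≤ a * hSet (K : Set (EuclideanSpace ℝ (Fin n))) x
      + b * hSet (K : Set (EuclideanSpace ℝ (Fin n))) y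
  refine hSet_le K.nonempty fun k hk => ?_
  rw [inner_add_left, real_inner_smul_left, real_inner_smul_left]
  exact add_le_add (mul_le_mul_of_nonneg_left (inner_le_hSet K.isCompact hk x) ha)
    (mul_le_mul_of_nonneg_left (inner_le_hSet K.isCompact hk y) hb)

lemma sum_compl_pow_indicator (c : Fin n → Fin n) :
    (∑ S : Finset (Fin n), ((-1 : ℝ) ^ (Sᶜ.card)) * (if (∀ k, c k ∈ S) then 1 else 0))
      = if Function.Surjective c then 1 else 0 := by
  classical
  set R := Finset.image c Finset.univ with hR
  have hcond : ∀ S : Finset (Fin n), (∀ k, c k ∈ S) ↔ Sᶜ ⊆ Rᶜ := by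
    intro S
    rw [Finset.compl_subset_compl]
    constructor
    · intro h x hx
      obtain ⟨k, -, rfl⟩ := Finset.mem_image.1 hx
      exact h k
    · intro h k
      exact h (Finset.mem_image_of_mem c (Finset.mem_univ k))
  have step1 : (∑ S : Finset (Fin n), ((-1 : ℝ) ^ (Sᶜ.card)) * (if (∀ k, c k ∈ S) then 1 else 0))
      = ∑ T : Finset (Fin n), ((-1 : ℝ) ^ (T.card)) * (if T ∈ Rᶜ.powerset then 1 else 0) := by
    apply Fintype.sum_equiv (Function.Involutive.toPerm _ compl_involutive)
    intro S
    simp only [Function.Involutive.coe_toPerm, Finset.mem_powerset, hcond S]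
  rw [step1]
  have step2 : (∑ T : Finset (Fin n), ((-1 : ℝ) ^ (T.card)) * (if T ∈ Rᶜ.powerset then 1 else 0))
      = ∑ T ∈ Rᶜ.powerset, ((-1 : ℝ) ^ (T.card)) := by
    rw [Finset.sum_congr rfl (fun T _ => (mul_ite _ _ _ _).trans (by rw [mul_one, mul_zero]))]
    exact Finset.sum_ite_mem Finset.univ Rᶜ.powerset _ |>.trans
      (by rw [Finset.univ_inter])
  rw [step2]
  have step3 : (∑ T ∈ Rᶜ.powerset, ((-1 : ℝ) ^ (T.card)))
      = if Rᶜ = ∅ then 1 else 0 := by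
    have h := Finset.sum_powerset_neg_one_pow_card (x := Rᶜ)
    have h4 := congrArg (fun z : ℤ => (z : ℝ)) h
    push_cast at h4
    simpa [apply_ite] using h4
  rw [step3]
  congr 1
  rw [Finset.compl_eq_empty_iff]
  simp only [eq_iff_iff]
  constructor
  · intro h x
    have hx := (Finset.eq_univ_iff_forall.1 h) x
    obtain ⟨k, -, hk⟩ := Finset.mem_image.1 hx
    exact ⟨k, hk⟩
  · intro h
    apply Finset.eq_univ_iff_forall.2
    intro x
    obtain ⟨k, hk⟩ := h x
    exact Finset.mem_image.2 ⟨k, Finset.mem_univ _, hk⟩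

lemma sum_surjective_eq_perm (γ : (Fin n → Fin n) → ℝ) :
    (∑ c : Fin n → Fin n, if Function.Surjective c then γ c else 0)
      = ∑ σ : Equiv.Perm (Fin n), γ ⇑σ := by
  classical
  rw [← Finset.sum_filter]
  refine (Finset.sum_bij (fun (σ : Equiv.Perm (Fin n)) _ => ⇑σ) ?_ ?_ ?_ ?_).symm
  · intro σ _
    exact Finset.mem_filter.2 ⟨Finset.mem_univ _, σ.surjective⟩
  · intro σ₁ _ σ₂ _ h
    exact Equiv.coe_fn_injective h
  · intro c hc
    have hbij : Function.Bijective c := ((Finset.mem_filter.1 hc).2).bijective_of_finite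
    exact ⟨Equiv.ofBijective c hbij, Finset.mem_univ _, rfl⟩
  · intro σ _
    rfl

lemma extract_coeff (γ : (Fin n → Fin n) → ℝ)
    (hsym : ∀ σ : Equiv.Perm (Fin n), γ ⇑σ = γ id)
    (hzero : ∀ S : Finset (Fin n),
      (∑ c : Fin n → Fin n, if (∀ k, c k ∈ S) then γ c else 0) = 0) :
    γ id = 0 := by
  classical
  have htot : (∑ S : Finset (Fin n), ((-1 : ℝ) ^ (Sᶜ.card)) *
      (∑ c : Fin n → Fin n, if (∀ k, c k ∈ S) then γ c else 0)) = 0 := by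
    simp [hzero]
  have h1 : (∑ S : Finset (Fin n), ((-1 : ℝ) ^ (Sᶜ.card)) *
      (∑ c : Fin n → Fin n, if (∀ k, c k ∈ S) then γ c else 0))
      = ∑ c : Fin n → Fin n, (if Function.Surjective c then (1 : ℝ) else 0) * γ c := by
    simp_rw [Finset.mul_sum]
    rw [Finset.sum_comm]
    refine Finset.sum_congr rfl fun c _ => ?_
    rw [← sum_compl_pow_indicator c, Finset.sum_mul]
    refine Finset.sum_congr rfl fun S _ => ?_
    by_cases h : ∀ k, c k ∈ S <;> simp [h]
  have h2 : (∑ c : Fin n → Fin n, (if Function.Surjective c then (1 : ℝ) else 0) * γ c)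
      = (n.factorial : ℝ) * γ id := by
    have hsimp : ∀ c : Fin n → Fin n, (if Function.Surjective c then (1 : ℝ) else 0) * γ c
        = if Function.Surjective c then γ c else 0 := fun c => by
      by_cases h : Function.Surjective c <;> simp [h]
    simp_rw [hsimp]
    rw [sum_surjective_eq_perm γ,
      Finset.sum_congr rfl (fun σ _ => hsym σ), Finset.sum_const, Finset.card_univ,
      Fintype.card_perm, Fintype.card_fin, nsmul_eq_mul]
  rw [h1, h2] at htot
  have hf : (n.factorial : ℝ) ≠ 0 := Nat.cast_ne_zero.2 (Nat.factorial_ne_zero n)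
  exact (mul_eq_zero.1 htot).resolve_left hf

lemma kappa_pos (i : ℕ) : 0 < kappa i := by
  unfold kappa
  refine ENNReal.toReal_pos ?_ ?_
  · exact (Metric.measure_closedBall_pos volume (0 : EuclideanSpace ℝ (Fin i)) one_pos).ne'
  · exact (isCompact_closedBall (0 : EuclideanSpace ℝ (Fin i)) 1).measure_lt_top.ne

end Aux

variable {n : ℕ}

/-- the mixed Monge–Ampère measure of support functions of convex bodies is the
mixed volume times the Dirac measure at the origin; in particular
`binom(n,j) MA(h_K[j], h_{Bⁿ}[n−j]; ·) = κ_{n−j} V_j(K) δ_o`. -/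
theorem mixedMA_supportFns_eq_mixedVolume_dirac
    (MAm : (Fin n → (EuclideanSpace ℝ (Fin n) → ℝ)) → Measure (EuclideanSpace ℝ (Fin n)))
    (Vmix : (Fin n → ConvexBody (EuclideanSpace ℝ (Fin n))) → ℝ)
    -- `MAm` is symmetric and polarizes the Monge–Ampère measure:
    (hMAsymm : ∀ (σ : Equiv.Perm (Fin n)) (v : Fin n → EuclideanSpace ℝ (Fin n) → ℝ),
      MAm (v ∘ σ) = MAm v)
    (hMA : ∀ (m : ℕ) (lam : Fin m → ℝ) (v : Fin m → EuclideanSpace ℝ (Fin n) → ℝ),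
      (∀ i, 0 ≤ lam i) → (∀ i, ConvexOn ℝ Set.univ (v i)) →
      ∀ B : Set (EuclideanSpace ℝ (Fin n)), MeasurableSet B →
        MAfn (fun x => ∑ i, lam i * v i x) B
          = ∑ c : Fin n → Fin m, (∏ k, ENNReal.ofReal (lam (c k))) * MAm (fun k => v (c k)) B)
    -- `Vmix` is symmetric and polarizes the volume:
    (hVsymm : ∀ (σ : Equiv.Perm (Fin n)) (K : Fin n → ConvexBody (EuclideanSpace ℝ (Fin n))),
      Vmix (K ∘ σ) = Vmix K)
    (hV : ∀ (m : ℕ) (lam : Fin m → ℝ) (K : Fin m → ConvexBody (EuclideanSpace ℝ (Fin n))),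
      (∀ i, 0 ≤ lam i) →
        (volume (∑ i, lam i • (K i : Set (EuclideanSpace ℝ (Fin n))))).toReal
          = ∑ c : Fin n → Fin m, (∏ k, lam (c k)) * Vmix (fun k => K (c k))) :
    (∀ (K : Fin n → ConvexBody (EuclideanSpace ℝ (Fin n)))
        (B : Set (EuclideanSpace ℝ (Fin n))), MeasurableSet B →
      MAm (fun i => supportFn (K i)) B
        = ENNReal.ofReal (Vmix K) * Measure.dirac (0 : EuclideanSpace ℝ (Fin n)) B)
    ∧ (∀ (K : ConvexBody (EuclideanSpace ℝ (Fin n))) (j : ℕ), j ≤ n →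
        ∀ B : Set (EuclideanSpace ℝ (Fin n)), MeasurableSet B →
          (n.choose j : ℝ≥0∞)
              * MAm (fun i => if (i : ℕ) < j then supportFn K else supportFn (unitBody n)) B
            = ENNReal.ofReal (kappa (n - j) *
                ((n.choose j : ℝ) / kappa (n - j)
                  * Vmix (fun i => if (i : ℕ) < j then K else unitBody n)))
              * Measure.dirac (0 : EuclideanSpace ℝ (Fin n)) B) := by
  classical
  have main : ∀ (K : Fin n → ConvexBody (EuclideanSpace ℝ (Fin n)))
      (B : Set (EuclideanSpace ℝ (Fin n))), MeasurableSet B →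
      MAm (fun i => supportFn (K i)) B
        = ENNReal.ofReal (Vmix K) * Measure.dirac (0 : EuclideanSpace ℝ (Fin n)) B := by
    intro K B hB
    set v : Fin n → EuclideanSpace ℝ (Fin n) → ℝ := fun i => supportFn (K i) with hv
    have hvconv : ∀ i, ConvexOn ℝ Set.univ (v i) := fun i => supportFn_convexOn (K i)
    have heval : ∀ lam : Fin n → ℝ, (∀ i, 0 ≤ lam i) →
        (∑ c : Fin n → Fin n, (∏ k, ENNReal.ofReal (lam (c k))) * MAm (fun k => v (c k)) B)
          = ENNReal.ofReal
              ((volume (∑ i, lam i • ((K i : Set (EuclideanSpace ℝ (Fin n)))))).toReal)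
              * Measure.dirac (0 : EuclideanSpace ℝ (Fin n)) B := by
      intro lam hlam
      rw [← hMA n lam v hlam hvconv B hB]
      obtain ⟨hcomp, hconv, hne⟩ := combo_props n lam K
      have hfun : (fun x => ∑ i, lam i * v i x)
          = hSet (∑ i, lam i • ((K i : Set (EuclideanSpace ℝ (Fin n))))) :=
        funext fun u => (hSet_combo n lam hlam K u).symm
      rw [hfun, MAfn_hSet hconv hcomp hne hB,
        ENNReal.ofReal_toReal hcomp.measure_lt_top.ne]
    have hfin : ∀ c : Fin n → Fin n, MAm (fun k => v (c k)) B ≠ ⊤ := by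
      have h1 := heval (fun _ => 1) (fun _ => zero_le_one)
      simp only [ENNReal.ofReal_one, Finset.prod_const_one, one_mul] at h1
      intro c
      have hlt : (∑ c : Fin n → Fin n, MAm (fun k => v (c k)) B) < ⊤ := by
        rw [h1]
        exact ENNReal.mul_lt_top ENNReal.ofReal_lt_top (measure_lt_top _ B)
      exact ((ENNReal.sum_lt_top).1 hlt c (Finset.mem_univ c)).ne
    set d : ℝ := (Measure.dirac (0 : EuclideanSpace ℝ (Fin n)) B).toReal with hd
    have hγ : (MAm v B).toReal - d * Vmix K = 0 := by
      refine extract_coeff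
        (fun c => (MAm (fun k => v (c k)) B).toReal - d * Vmix (fun k => K (c k))) ?_ ?_
      · intro σ
        show (MAm (v ∘ ⇑σ) B).toReal - d * Vmix (K ∘ ⇑σ) = _
        rw [hMAsymm σ v, hVsymm σ K]
        rfl
      · intro S
        have hlam : ∀ i : Fin n, (0 : ℝ) ≤ if i ∈ S then (1 : ℝ) else 0 := fun i => by
          by_cases h : i ∈ S <;> simp [h]
        have hE := heval (fun i => if i ∈ S then (1 : ℝ) else 0) hlam
        have hVS := hV n (fun i => if i ∈ S then (1 : ℝ) else 0) K hlam
        have hco : ∀ c : Fin n → Fin n,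
            (∏ k, ENNReal.ofReal (if c k ∈ S then (1 : ℝ) else 0))
              = if (∀ k, c k ∈ S) then 1 else 0 := by
          intro c
          by_cases h : ∀ k, c k ∈ S
          · rw [if_pos h]
            exact Finset.prod_eq_one fun k _ => by rw [if_pos (h k), ENNReal.ofReal_one]
          · rw [if_neg h]
            push_neg at h
            obtain ⟨k₀, hk₀⟩ := h
            exact Finset.prod_eq_zero (Finset.mem_univ k₀)
              (by rw [if_neg hk₀, ENNReal.ofReal_zero])
        have hcoR : ∀ c : Fin n → Fin n,
            (∏ k, (if c k ∈ S then (1 : ℝ) else 0))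
              = if (∀ k, c k ∈ S) then (1 : ℝ) else 0 := by
          intro c
          by_cases h : ∀ k, c k ∈ S
          · rw [if_pos h]
            exact Finset.prod_eq_one fun k _ => if_pos (h k)
          · rw [if_neg h]
            push_neg at h
            obtain ⟨k₀, hk₀⟩ := h
            exact Finset.prod_eq_zero (Finset.mem_univ k₀) (if_neg hk₀)
        simp only [hco] at hE
        simp only [hcoR] at hVS
        have hEr := congrArg ENNReal.toReal hE
        rw [ENNReal.toReal_mul, ENNReal.toReal_ofReal ENNReal.toReal_nonneg,
          ENNReal.toReal_sum (fun c _ => ?_)] at hEr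
        swap
        · by_cases h : ∀ k, c k ∈ S
          · simp only [if_pos h, one_mul]
            exact hfin c
          · simp [if_neg h]
        have hterm : ∀ c : Fin n → Fin n,
            ((if (∀ k, c k ∈ S) then (1 : ℝ≥0∞) else 0) * MAm (fun k => v (c k)) B).toReal
              = if (∀ k, c k ∈ S) then (MAm (fun k => v (c k)) B).toReal else 0 := fun c => by
          by_cases h : ∀ k, c k ∈ S <;> simp [h]
        simp only [hterm] at hEr
        rw [hVS] at hEr
        have hsplit : (∑ c : Fin n → Fin n, if (∀ k, c k ∈ S)
              then ((MAm (fun k => v (c k)) B).toReal - d * Vmix (fun k => K (c k))) else 0)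
            = (∑ c : Fin n → Fin n, if (∀ k, c k ∈ S)
                then (MAm (fun k => v (c k)) B).toReal else 0)
              - (∑ c : Fin n → Fin n, if (∀ k, c k ∈ S)
                then d * Vmix (fun k => K (c k)) else 0) := by
          rw [← Finset.sum_sub_distrib]
          refine Finset.sum_congr rfl fun c _ => ?_
          by_cases h : ∀ k, c k ∈ S <;> simp [h]
        have hR : (∑ c : Fin n → Fin n,
              (if (∀ k, c k ∈ S) then (1 : ℝ) else 0) * Vmix (fun k => K (c k))) * d
            = ∑ c : Fin n → Fin n, if (∀ k, c k ∈ S)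
                then d * Vmix (fun k => K (c k)) else 0 := by
          rw [Finset.sum_mul]
          refine Finset.sum_congr rfl fun c _ => ?_
          by_cases h : ∀ k, c k ∈ S <;> simp [h, mul_comm]
        rw [hsplit, hEr, hR, sub_self]
    by_cases h0 : (0 : EuclideanSpace ℝ (Fin n)) ∈ B
    · have hd1 : d = 1 := by
        rw [hd, Measure.dirac_apply' _ hB, Set.indicator_of_mem h0, Pi.one_apply,
          ENNReal.toReal_one]
      rw [hd1, one_mul] at hγ
      have hMAv : (MAm v B).toReal = Vmix K := by linarith
      rw [Measure.dirac_apply' _ hB, Set.indicator_of_mem h0, Pi.one_apply, mul_one]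
      calc MAm v B = ENNReal.ofReal ((MAm v B).toReal) :=
            (ENNReal.ofReal_toReal (show MAm v B ≠ ⊤ from hfin id)).symm
      _ = ENNReal.ofReal (Vmix K) := by rw [hMAv]
    · have hd0 : d = 0 := by
        rw [hd, Measure.dirac_apply' _ hB, Set.indicator_of_notMem h0, ENNReal.toReal_zero]
      rw [Measure.dirac_apply' _ hB, Set.indicator_of_notMem h0, mul_zero]
      rw [hd0, zero_mul, sub_zero] at hγ
      exact ((ENNReal.toReal_eq_zero_iff _).1 hγ).resolve_right (hfin id)
  refine ⟨main, ?_⟩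
  intro K j hj B hB
  have h1 := main (fun i => if (i : ℕ) < j then K else unitBody n) B hB
  have hfn : (fun i : Fin n => if (i : ℕ) < j then supportFn K else supportFn (unitBody n))
      = fun i : Fin n => supportFn (if (i : ℕ) < j then K else unitBody n) := by
    funext i
    by_cases h : (i : ℕ) < j <;> simp [h]
  rw [hfn, h1]
  have hk : (0 : ℝ) < kappa (n - j) := kappa_pos (n - j)
  have harith : kappa (n - j) * ((n.choose j : ℝ) / kappa (n - j)
        * Vmix (fun i => if (i : ℕ) < j then K else unitBody n))
      = (n.choose j : ℝ) * Vmix (fun i => if (i : ℕ) < j then K else unitBody n) := by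
    field_simp
  rw [harith, ENNReal.ofReal_mul (Nat.cast_nonneg _), ENNReal.ofReal_natCast]
  ring

end
end

section
/- Let e ∈ S^{n−1}, E = e^⊥, and let u : ℝ^n → (−∞,∞] be a proper, lsc, super-coercive convex function. Then for every ε > 0 and every x ∈ ℝ^n of the form x = x_E + r e with x_E ∈ proj_E dom(u) and r ∈ ℝ, the infimal convolution u □ I_{[o,εe]} satisfies: (u □ I_{[o,εe]})(x_E + re) = u(x_E + re) if r ≤ m_u(x_E); = (proj_E u)(x_E) if m_u(x_E) < r < m_u(x_E) + ε; and = u(x_E + (r−ε)e) if r ≥ m_u(x_E) + ε, where m_u(x_E) is the midpoint of the compact interval argmin_{s∈ℝ} u(x_E + s e). -/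
open Metric MeasureTheory Set
open scoped InnerProductSpace RealInnerProductSpace ENNReal Pointwise NNReal Classical

noncomputable section

/-! Along the line `xE + ℝ e` the infimal convolution with `I_{[o,εe]}` is the sliding-window
infimum `r ↦ inf_{t ∈ [0, ε]} f (r - t)` of the fiber `f s = u (xE + s e)`. Convexity of `u` makes
`f` quasiconvex, so `f` is antitone up to the right end `b` of its argmin set and monotone from
its left end `a`; lower semicontinuity and coercivity make the argmin set compact and nonempty,
so it is the interval `[a, b]` and contains the midpoint `m`. According as `r ≤ m`,
`m < r < m + ε` or `m + ε ≤ r`, the window `[r - ε, r]` lies left of `b`, contains `m`, or lies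
right of `a`. -/

open Filter Topology

theorem LowerSemicontinuous.isClosed_setOf_forall_le {α β : Type*} [TopologicalSpace α]
    [LinearOrder β] {f : α → β} (hf : LowerSemicontinuous f) :
    IsClosed {a | ∀ b, f a ≤ f b} := by
  rw [ofPred_forall]
  exact isClosed_iInter fun b => hf.isClosed_preimage (f b)

section ArgminSet

variable {α β : Type*} [TopologicalSpace α] [LinearOrder β] [OrderTop β] [TopologicalSpace β]
  [OrderTopology β] {f : α → β}

theorem exists_isCompact_forall_lt_of_tendsto_cocompact (htop : Tendsto f (cocompact α) (𝓝 ⊤))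
    {a : α} (ha : f a ≠ ⊤) : ∃ K, IsCompact K ∧ ∀ b ∉ K, f a < f b := by
  obtain ⟨K, hK, hKsub⟩ := mem_cocompact.1 (htop (lt_mem_nhds ha.lt_top))
  exact ⟨K, hK, fun b hb => hKsub hb⟩

theorem LowerSemicontinuous.isCompact_setOf_forall_le (hf : LowerSemicontinuous f)
    (htop : Tendsto f (cocompact α) (𝓝 ⊤)) {a : α} (ha : f a ≠ ⊤) :
    IsCompact {a | ∀ b, f a ≤ f b} := by
  obtain ⟨K, hK, hlt⟩ := exists_isCompact_forall_lt_of_tendsto_cocompact htop ha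
  refine hK.of_isClosed_subset hf.isClosed_setOf_forall_le fun b hb => ?_
  by_contra hbK
  exact (hlt b hbK).not_ge (hb a)

theorem LowerSemicontinuous.exists_forall_le_of_tendsto_cocompact (hf : LowerSemicontinuous f)
    (htop : Tendsto f (cocompact α) (𝓝 ⊤)) {a : α} (ha : f a ≠ ⊤) : ∃ b, ∀ c, f b ≤ f c := by
  obtain ⟨K, hK, hlt⟩ := exists_isCompact_forall_lt_of_tendsto_cocompact htop ha
  have haK : a ∈ K := by_contra fun haK => (hlt a haK).false
  obtain ⟨b, hbK, hb⟩ := (hf.lowerSemicontinuousOn K).exists_isMinOn ⟨a, haK⟩ hK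
  refine ⟨b, fun c => ?_⟩
  by_cases hc : c ∈ K
  · exact hb hc
  · exact (hb haK).trans (hlt c hc).le

end ArgminSet

section Quasiconvex

theorem QuasiconvexOn.convex_setOf_forall_le {𝕜 E β : Type*} [Semiring 𝕜] [PartialOrder 𝕜]
    [AddCommMonoid E] [SMul 𝕜 E] [LE β] {f : E → β} (hf : QuasiconvexOn 𝕜 univ f) :
    Convex 𝕜 {x | ∀ y, f x ≤ f y} := by
  rw [ofPred_forall]
  exact convex_iInter fun y => by simpa using hf (f y)

variable {β : Type*} [Preorder β] {f : ℝ → β} {a : ℝ}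

theorem QuasiconvexOn.antitoneOn_Iic (hf : QuasiconvexOn ℝ univ f) (ha : ∀ t, f a ≤ f t) :
    AntitoneOn f (Iic a) := fun s _ _ ht hst =>
  ((hf (f s)).ordConnected.out ⟨mem_univ s, le_rfl⟩ ⟨mem_univ a, ha s⟩ ⟨hst, ht⟩).2

theorem QuasiconvexOn.monotoneOn_Ici (hf : QuasiconvexOn ℝ univ f) (ha : ∀ t, f a ≤ f t) :
    MonotoneOn f (Ici a) := fun _ hs t _ hst =>
  ((hf (f t)).ordConnected.out ⟨mem_univ a, ha t⟩ ⟨mem_univ t, le_rfl⟩ ⟨hs, hst⟩).2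

end Quasiconvex

section Window

variable {β : Type*} [CompleteLattice β] {f : ℝ → β} {r ε : ℝ}

theorem AntitoneOn.biInf_Icc_sub_eq (hf : AntitoneOn f (Iic r)) (hε : 0 ≤ ε) :
    ⨅ t ∈ Icc 0 ε, f (r - t) = f r :=
  le_antisymm ((biInf_le (fun t => f (r - t)) (left_mem_Icc.2 hε)).trans_eq (by rw [sub_zero]))
    (le_iInf₂ fun t ht => hf (mem_Iic.2 (by linarith [ht.1])) self_mem_Iic (by linarith [ht.1]))

theorem MonotoneOn.biInf_Icc_sub_eq (hf : MonotoneOn f (Ici (r - ε))) (hε : 0 ≤ ε) :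
    ⨅ t ∈ Icc 0 ε, f (r - t) = f (r - ε) :=
  le_antisymm (biInf_le _ ⟨hε, le_rfl⟩)
    (le_iInf₂ fun t ht => hf self_mem_Ici (mem_Ici.2 (by linarith [ht.2])) (by linarith [ht.2]))

theorem biInf_Icc_sub_eq_iInf {t₀ : ℝ} (ht₀ : t₀ ∈ Icc 0 ε) (hmin : ∀ s, f (r - t₀) ≤ f s) :
    ⨅ t ∈ Icc 0 ε, f (r - t) = ⨅ s, f s :=
  le_antisymm ((biInf_le _ ht₀).trans (le_iInf hmin)) (le_iInf₂ fun _ _ => iInf_le _ _)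

end Window

theorem infConv_indicatorE {W : Type*} [AddGroup W] {u : W → EReal} (hu : ∀ x, u x ≠ ⊥)
    (s : Set W) (x : W) :
    infConv u (indicatorE s) x = ⨅ y ∈ s, u (x - y) := by
  refine iInf_congr fun y => ?_
  by_cases hy : y ∈ s <;> simp [indicatorE, hy, EReal.add_top_of_ne_bot (hu _)]

section Fiber

variable {W : Type*} [AddCommGroup W] [Module ℝ W] {u : W → EReal}

theorem ConvexE.quasiconvexOn (hu : ConvexE u) : QuasiconvexOn ℝ univ u := by
  have hlevel (c : ℝ) : Convex ℝ {x | u x ≤ c} := fun x hx y hy a b ha hb hab => by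
    simpa [← add_mul, hab] using hu (x := (x, c)) (y := (y, c)) hx hy ha hb hab
  intro r
  have hsub : {x ∈ univ | u x ≤ r} = ⋂ (z : ℝ) (_ : r < z), {x | u x ≤ z} := by
    ext x
    simp [EReal.le_of_forall_lt_iff_le]
  rw [hsub]
  exact convex_iInter fun z => convex_iInter fun _ => hlevel z

theorem QuasiconvexOn.comp_add_smul (hu : QuasiconvexOn ℝ univ u) (x e : W) :
    QuasiconvexOn ℝ univ fun s : ℝ => u (x + s • e) := by
  intro r
  have hpre : {s : ℝ | s ∈ univ ∧ u (x + s • e) ≤ r} =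
      AffineMap.lineMap x (x + e) ⁻¹' {y ∈ univ | u y ≤ r} := by
    ext s
    simp [AffineMap.lineMap_apply, add_comm]
  rw [hpre]
  exact (hu r).affine_preimage _

theorem segment_zero_smul_eq_image {ε : ℝ} (hε : 0 ≤ ε) (e : W) :
    segment ℝ 0 (ε • e) = (fun t : ℝ => t • e) '' Icc 0 ε := by
  have := image_segment ℝ (LinearMap.toSpanSingleton ℝ W e).toAffineMap 0 ε
  simp only [LinearMap.coe_toAffineMap, LinearMap.toSpanSingleton_apply, zero_smul] at this
  rw [← segment_eq_Icc hε, this]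

theorem infConv_indicatorE_segment_apply (hu : ∀ x, u x ≠ ⊥) {ε : ℝ} (hε : 0 ≤ ε) (x e : W)
    (r : ℝ) : infConv u (indicatorE (segment ℝ 0 (ε • e))) (x + r • e) =
      ⨅ t ∈ Icc 0 ε, u (x + (r - t) • e) := by
  simp only [infConv_indicatorE hu, segment_zero_smul_eq_image hε, iInf_image, sub_smul,
    add_sub_assoc]

end Fiber

theorem SuperCoercive.tendsto_cocompact {W : Type*} [NormedAddCommGroup W] [ProperSpace W]
    {u : W → EReal} (hu : SuperCoercive u) : Tendsto u (cocompact W) (𝓝 ⊤) := by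
  rw [← Metric.cobounded_eq_cocompact, EReal.tendsto_nhds_top_iff_real]
  intro c
  obtain ⟨R, hR⟩ := hu 1
  filter_upwards [tendsto_norm_cobounded_atTop.eventually_ge_atTop (max R (c + 1))] with x hx
  calc (c : EReal) < ((1 * ‖x‖ : ℝ) : EReal) :=
        EReal.coe_lt_coe_iff.2 (by linarith [le_max_right R (c + 1)])
    _ ≤ u x := hR x (le_of_max_le_left hx)

theorem tendsto_add_smul_cocompact {W : Type*} [NormedAddCommGroup W] [NormedSpace ℝ W]
    [FiniteDimensional ℝ W] (x : W) {e : W} (he : e ≠ 0) :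
    Tendsto (fun s : ℝ => x + s • e) (cocompact ℝ) (cocompact W) :=
  ((Homeomorph.addLeft x).isClosedEmbedding.comp
    (isClosedEmbedding_smul_left he)).tendsto_cocompact

theorem infConv_indicator_segment_cases_general {n : ℕ}
    (u : EuclideanSpace ℝ (Fin n) → EReal)
    (hproper : ProperE u) (hlsc : LowerSemicontinuous u) (hconv : ConvexE u)
    (hsc : SuperCoercive u)
    (e : EuclideanSpace ℝ (Fin n)) (he : ‖e‖ = 1)
    (xE : EuclideanSpace ℝ (Fin n))
    (hdom : ∃ s : ℝ, u (xE + s • e) ≠ ⊤)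
    (A : Set ℝ) (hA : A = {s : ℝ | ∀ t : ℝ, u (xE + s • e) ≤ u (xE + t • e)})
    (m : ℝ) (hm : m = (sInf A + sSup A) / 2)
    (ε : ℝ) (hε : 0 < ε) (r : ℝ) :
    (r ≤ m →
      infConv u (indicatorE (segment ℝ 0 (ε • e))) (xE + r • e) = u (xE + r • e)) ∧
    (m < r → r < m + ε →
      infConv u (indicatorE (segment ℝ 0 (ε • e))) (xE + r • e) = ⨅ s : ℝ, u (xE + s • e)) ∧
    (m + ε ≤ r →
      infConv u (indicatorE (segment ℝ 0 (ε • e))) (xE + r • e) = u (xE + (r - ε) • e)) := by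
  set f : ℝ → EReal := fun s => u (xE + s • e)
  have hf_qc : QuasiconvexOn ℝ univ f := hconv.quasiconvexOn.comp_add_smul xE e
  have hf_lsc : LowerSemicontinuous f := hlsc.comp (by fun_prop)
  have hf_top : Tendsto f (cocompact ℝ) (𝓝 ⊤) := hsc.tendsto_cocompact.comp
    (tendsto_add_smul_cocompact xE (norm_ne_zero_iff.1 (by rw [he]; exact one_ne_zero)))
  obtain ⟨s₀, hs₀⟩ := hdom
  have hA_min : ∀ q ∈ A, ∀ t, f q ≤ f t := by rw [hA]; exact fun q hq => hq
  have hA_compact : IsCompact A := by rw [hA]; exact hf_lsc.isCompact_setOf_forall_le hf_top hs₀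
  have hA_ne : A.Nonempty := by
    rw [hA]; exact hf_lsc.exists_forall_le_of_tendsto_cocompact hf_top hs₀
  have ha := hA_compact.sInf_mem hA_ne
  have hb := hA_compact.sSup_mem hA_ne
  have hab := csInf_le_csSup hA_ne hA_compact.bddBelow hA_compact.bddAbove
  have hm_mem : m ∈ A := by
    have hA_convex : Convex ℝ A := by rw [hA]; exact hf_qc.convex_setOf_forall_le
    exact hA_convex.ordConnected.out ha hb ⟨by linarith, by linarith⟩
  rw [infConv_indicatorE_segment_apply hproper.1 hε.le]
  refine ⟨fun hrm => ?_, fun hmr hrm => ?_, fun hmr => ?_⟩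
  · exact ((hf_qc.antitoneOn_Iic (hA_min _ hb)).mono
      (Iic_subset_Iic.2 (by linarith))).biInf_Icc_sub_eq hε.le
  · refine biInf_Icc_sub_eq_iInf (f := f) (t₀ := r - m) ⟨by linarith, by linarith⟩ ?_
    rw [sub_sub_cancel]
    exact hA_min m hm_mem
  · exact ((hf_qc.monotoneOn_Ici (hA_min _ ha)).mono
      (Ici_subset_Ici.2 (by linarith))).biInf_Icc_sub_eq hε.le

/-- the explicit three-case formula for `u □ I_{[o,εe]}` along the fiber
`x_E + ℝ e`, where `m` is the midpoint of the argmin interval of `s ↦ u(x_E + s e)`. -/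
theorem infConv_indicator_segment_cases {n : ℕ}
    (u : EuclideanSpace ℝ (Fin n) → EReal)
    (hproper : ProperE u) (hlsc : LowerSemicontinuous u) (hconv : ConvexE u)
    (hsc : SuperCoercive u)
    (e : EuclideanSpace ℝ (Fin n)) (he : ‖e‖ = 1)
    (xE : EuclideanSpace ℝ (Fin n)) (hxE : ⟪xE, e⟫_ℝ = 0)
    (hdom : ∃ s : ℝ, u (xE + s • e) ≠ ⊤)
    (A : Set ℝ) (hA : A = {s : ℝ | ∀ t : ℝ, u (xE + s • e) ≤ u (xE + t • e)})
    (m : ℝ) (hm : m = (sInf A + sSup A) / 2)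
    (ε : ℝ) (hε : 0 < ε) (r : ℝ) :
    (r ≤ m →
      infConv u (indicatorE (segment ℝ 0 (ε • e))) (xE + r • e) = u (xE + r • e)) ∧
    (m < r → r < m + ε →
      infConv u (indicatorE (segment ℝ 0 (ε • e))) (xE + r • e) = ⨅ s : ℝ, u (xE + s • e)) ∧
    (m + ε ≤ r →
      infConv u (indicatorE (segment ℝ 0 (ε • e))) (xE + r • e) = u (xE + (r - ε) • e)) :=
  infConv_indicator_segment_cases_general u hproper hlsc hconv hsc e he xE hdom A hA m hm ε hε r

end
end

section
/- Let 1 ≤ j ≤ n−2, let K be a convex body in ℝ^n, let L = e_n^⊥, and let B_L^{n−1} be the unit ball of L. For z ∈ S^{n−1}∖{±e_n}, the vector z is (K[j], B_L^{n−1}[n−1−j])-extreme if and only if dim TS(K,z) ≥ j and TS(K,z) ⊄ L. For z ∈ {±e_n}, z is (K[j], B_L^{n−1}[n−1−j])-extreme if and only if dim TS(K,z) ≥ j. -/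
open Metric MeasureTheory Set
open scoped InnerProductSpace RealInnerProductSpace ENNReal Pointwise NNReal Classical

noncomputable section

/-- The support set `F(K,z) = {x ∈ K : ⟨x,z⟩ = h_K(z)}`. -/
def suppSet {n : ℕ} (K : ConvexBody (EuclideanSpace ℝ (Fin n)))
    (z : EuclideanSpace ℝ (Fin n)) : Set (EuclideanSpace ℝ (Fin n)) :=
  {x | x ∈ (K : Set (EuclideanSpace ℝ (Fin n))) ∧ ⟪x, z⟫_ℝ = supportFn K z}

/-- The normal cone of `K` at a point `x`. -/
def normalConeAt {n : ℕ} (K : ConvexBody (EuclideanSpace ℝ (Fin n)))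
    (x : EuclideanSpace ℝ (Fin n)) : Set (EuclideanSpace ℝ (Fin n)) :=
  {z | ∀ y ∈ (K : Set (EuclideanSpace ℝ (Fin n))), ⟪z, y⟫_ℝ ≤ ⟪z, x⟫_ℝ}

/-- The normal cone `N(K,F)` of `K` at a face `F` (i.e. the normal cone at the relative
interior points of `F`). -/
def normalConeFace {n : ℕ} (K : ConvexBody (EuclideanSpace ℝ (Fin n)))
    (F : Set (EuclideanSpace ℝ (Fin n))) : Set (EuclideanSpace ℝ (Fin n)) :=
  {z | ∀ x ∈ intrinsicInterior ℝ F, z ∈ normalConeAt K x}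

/-- `T` is the touching cone of `K` at `z`: a face (extreme subset) of the normal cone
`N(K, F(K,z))` containing `z` in its relative interior. -/
def IsTouchingCone {n : ℕ} (K : ConvexBody (EuclideanSpace ℝ (Fin n)))
    (z : EuclideanSpace ℝ (Fin n)) (T : Set (EuclideanSpace ℝ (Fin n))) : Prop :=
  IsExtreme ℝ (normalConeFace K (suppSet K z)) T ∧ z ∈ intrinsicInterior ℝ T

/-- The touching space `TS(K,z) = T(K,z)^⊥`, the orthogonal complement of the touching cone. -/
def TSset {n : ℕ} (K : ConvexBody (EuclideanSpace ℝ (Fin n)))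
    (z : EuclideanSpace ℝ (Fin n)) : Set (EuclideanSpace ℝ (Fin n)) :=
  {w | ∃ T, IsTouchingCone K z T ∧ ∀ v ∈ T, ⟪v, w⟫_ℝ = 0}

/-- The dimension of the touching space. -/
def dimTS {n : ℕ} (K : ConvexBody (EuclideanSpace ℝ (Fin n)))
    (z : EuclideanSpace ℝ (Fin n)) : ℕ :=
  Module.finrank ℝ (Submodule.span ℝ (TSset K z))

/-- The `(n-1)`-dimensional unit ball sitting inside the subspace `L`, as a convex body. -/
def ballIn {n : ℕ} (L : Submodule ℝ (EuclideanSpace ℝ (Fin n))) :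
    ConvexBody (EuclideanSpace ℝ (Fin n)) :=
  ⟨closedBall 0 1 ∩ (L : Set (EuclideanSpace ℝ (Fin n))),
    (convex_closedBall 0 1).inter L.convex,
    (isCompact_closedBall 0 1).inter_right
      (Submodule.closed_of_finiteDimensional L),
    ⟨0, by simp⟩⟩

/-- The positive hull of a single vector. -/
def pos1 {n : ℕ} (a : EuclideanSpace ℝ (Fin n)) : Set (EuclideanSpace ℝ (Fin n)) :=
  {x | ∃ t : ℝ, 0 ≤ t ∧ x = t • a}

/-- The positive hull of three vectors. -/
def pos3 {n : ℕ} (a b c : EuclideanSpace ℝ (Fin n)) : Set (EuclideanSpace ℝ (Fin n)) :=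
  {x | ∃ t₁ t₂ t₃ : ℝ, 0 ≤ t₁ ∧ 0 ≤ t₂ ∧ 0 ≤ t₃ ∧ x = t₁ • a + t₂ • b + t₃ • c}

/-- the "vertical" unit coordinate vector `eₙ` -/
def lastVec (n : ℕ) (hn : 1 ≤ n) : EuclideanSpace ℝ (Fin n) :=
  EuclideanSpace.single (⟨n - 1, by omega⟩ : Fin n) (1 : ℝ)

/-- `z` is `(C 0, …, C (m-1))`-extreme: there are unit vectors `w i ∈ TS(C i, z)` which are
linearly independent. -/
def IsExtremeNormal {n m : ℕ} (C : Fin m → ConvexBody (EuclideanSpace ℝ (Fin n)))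
    (z : EuclideanSpace ℝ (Fin n)) : Prop :=
  ∃ w : Fin m → EuclideanSpace ℝ (Fin n),
    (∀ i, ‖w i‖ = 1 ∧ w i ∈ TSset (C i) z) ∧ LinearIndependent ℝ w

/-!
The touching cone of `B_L` at `z` is the whole normal cone `N(B_L, F(B_L, z))`, because `z` lies
in its relative interior. For `z ∈ Lᗮ` (that is, `z = ±eₙ`) the support set is all of `B_L`,
whose normal cone is `Lᗮ`, so `TS(B_L, z) = L`. Otherwise the support set is the unit vector `u`
in the direction of the `L`-component of `z`, with normal cone `pos(u) + Lᗮ`, so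
`TS(B_L, z) = L ∩ z^⊥`.

Extremality is then linear algebra: independent `a₁, …, a_j ∈ TS(K, z)` extend by `k` further
vectors of a subspace `M` to an independent family iff `dim (M ∩ span a) + k ≤ dim M`. For
`z = ±eₙ` we have `M = L ⊇ TS(K, z)` and this always holds; otherwise `M = L ∩ z^⊥` has
dimension `n - 2` and the condition says exactly that some `aᵢ` leaves `L`.
-/
section LinearAlgebra

open Module Submodule

variable {K V : Type*} [DivisionRing K] [AddCommGroup V] [Module K V]

theorem exists_linearIndependent_fin_ite_iff {S T : Set V} {j m : ℕ} (hjm : j ≤ m) :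
    (∃ w : Fin m → V, LinearIndependent K w ∧ ∀ i : Fin m, w i ∈ if (i : ℕ) < j then S else T) ↔
      ∃ a : Fin j → V, LinearIndependent K a ∧ (∀ i, a i ∈ S) ∧
        ∃ b : Fin (m - j) → V, LinearIndependent K b ∧
          Disjoint (span K (range a)) (span K (range b)) ∧ ∀ i, b i ∈ T := by
  let σ : Fin j ⊕ Fin (m - j) ≃ Fin m := finSumFinEquiv.trans (finCongr (by omega))
  have hσl (i : Fin j) : ((σ (.inl i) : Fin m) : ℕ) < j := by simp [σ]
  have hσr (i : Fin (m - j)) : ¬ ((σ (.inr i) : Fin m) : ℕ) < j := by simp [σ]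
  constructor
  · rintro ⟨w, hw, hwST⟩
    obtain ⟨ha, hb, hab⟩ := linearIndependent_sum.1 (hw.comp σ σ.injective)
    refine ⟨_, ha, fun i => ?_, _, hb, hab, fun i => ?_⟩
    · simpa [hσl i] using hwST (σ (.inl i))
    · simpa [hσr i] using hwST (σ (.inr i))
  · rintro ⟨a, ha, haS, b, hb, hab, hbT⟩
    refine ⟨Sum.elim a b ∘ σ.symm, (ha.sum_type hb hab).comp _ σ.symm.injective, fun i => ?_⟩
    obtain ⟨k, rfl⟩ := σ.surjective i
    rcases k with k | k
    · simpa [hσl k] using haS k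
    · simpa [hσr k] using hbT k

variable [FiniteDimensional K V]

theorem exists_linearIndependent_fin_mem_iff {S : Set V} {j : ℕ} :
    (∃ a : Fin j → V, LinearIndependent K a ∧ ∀ i, a i ∈ S) ↔ j ≤ finrank K (span K S) := by
  constructor
  · rintro ⟨a, ha, haS⟩
    calc j = finrank K (span K (range a)) := by rw [finrank_span_eq_card ha, Fintype.card_fin]
      _ ≤ finrank K (span K S) := finrank_mono (span_mono (range_subset_iff.2 haS))
  · intro hj
    obtain ⟨b, hbS, hbspan, hb⟩ := exists_linearIndependent K S
    have := hb.setFinite.fintype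
    rw [← hbspan, finrank_span_set_eq_card hb, toFinset_card] at hj
    let f : Fin j → b := (Fintype.equivFin b).symm ∘ Fin.castLE hj
    have hf : Function.Injective f :=
      (Fintype.equivFin b).symm.injective.comp (Fin.castLE_injective hj)
    exact ⟨fun i => f i, hb.comp f hf, fun i => hbS (f i).2⟩

theorem exists_linearIndependent_fin_mem_notMem_iff {S : Set V} {U : Submodule K V} {j : ℕ}
    (hj : 1 ≤ j) :
    (∃ a : Fin j → V, LinearIndependent K a ∧ (∀ i, a i ∈ S) ∧ ∃ i, a i ∉ U) ↔
      j ≤ finrank K (span K S) ∧ ¬ S ⊆ U := by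
  constructor
  · rintro ⟨a, ha, haS, i, hi⟩
    exact ⟨exists_linearIndependent_fin_mem_iff.1 ⟨a, ha, haS⟩, fun h => hi (h (haS i))⟩
  · rintro ⟨hjS, hSU⟩
    obtain ⟨a, ha, haS⟩ := exists_linearIndependent_fin_mem_iff.2 hjS
    by_cases haU : ∃ i, a i ∉ U
    · exact ⟨a, ha, haS, haU⟩
    obtain ⟨s, hsS, hsU⟩ := not_subset.1 hSU
    obtain ⟨j, rfl⟩ : ∃ j', j = j' + 1 := ⟨j - 1, by omega⟩
    -- replace the first vector of `a ⊆ U` by `s ∉ U`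
    have hspan : span K (range (a ∘ Fin.succ)) ≤ U :=
      span_le.2 (range_subset_iff.2 fun i => not_not.1 (not_exists.1 haU _))
    refine ⟨Fin.cons s (a ∘ Fin.succ),
      linearIndependent_finCons.2 ⟨ha.comp _ (Fin.succ_injective _), fun h => hsU (hspan h)⟩,
      Fin.cases hsS fun i => haS _, 0, hsU⟩

theorem finrank_inf_lt_iff {M W : Submodule K V} :
    finrank K ↥(M ⊓ W) < finrank K W ↔ ¬ W ≤ M := by
  rw [← inf_lt_right]
  exact ⟨fun h => lt_of_le_of_ne inf_le_right fun he => h.ne (by rw [he]),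
    finrank_lt_finrank_of_lt⟩

end LinearAlgebra

section InnerProduct

open Module Submodule

variable {F : Type*} [NormedAddCommGroup F] [InnerProductSpace ℝ F] [FiniteDimensional ℝ F]

theorem exists_linearIndependent_disjoint_iff {M W : Submodule ℝ F} {k : ℕ} :
    (∃ b : Fin k → F, LinearIndependent ℝ b ∧ Disjoint W (span ℝ (range b)) ∧ ∀ i, b i ∈ M) ↔
      finrank ℝ ↥(M ⊓ W) + k ≤ finrank ℝ M := by
  constructor
  · rintro ⟨b, hb, hWb, hbM⟩
    have hbk : finrank ℝ (span ℝ (range b)) = k := by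
      rw [finrank_span_eq_card hb, Fintype.card_fin]
    have hdisj : (M ⊓ W) ⊓ span ℝ (range b) = ⊥ :=
      disjoint_iff.1 (hWb.mono_left inf_le_right)
    have hsum := finrank_sup_add_finrank_inf_eq (M ⊓ W) (span ℝ (range b))
    rw [hdisj, finrank_bot, hbk] at hsum
    have hle := finrank_mono (sup_le (inf_le_left : M ⊓ W ≤ M) (span_le.2 (range_subset_iff.2 hbM)))
    omega
  · intro hk
    -- pick `b` in the orthogonal complement of `M ⊓ W` inside `M`
    have hU := finrank_add_inf_finrank_orthogonal (inf_le_left : M ⊓ W ≤ M)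
    set U := (M ⊓ W)ᗮ ⊓ M
    have hkU : k ≤ finrank ℝ U := by omega
    obtain ⟨f, hf⟩ := exists_linearIndependent_of_le_finrank hkU
    refine ⟨fun i => f i, hf.map' U.subtype U.ker_subtype, ?_, fun i => (f i).2.2⟩
    refine disjoint_iff.2 (eq_bot_iff.2 fun x ⟨hxW, hx⟩ => ?_)
    have hxU : x ∈ U := span_le.2 (range_subset_iff.2 fun i => (f i).2) hx
    exact (mem_bot ℝ).2 (inner_self_eq_zero.1 (hxU.1 x ⟨hxU.2, hxW⟩))

end InnerProduct

section IntrinsicInterior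

variable {F : Type*} [NormedAddCommGroup F] [NormedSpace ℝ F]

theorem exists_mem_openSegment_of_mem_intrinsicInterior {s : Set F} {x y : F}
    (hx : x ∈ intrinsicInterior ℝ s) (hy : y ∈ s) : ∃ p ∈ s, x ∈ openSegment ℝ y p := by
  obtain ⟨x', hx', rfl⟩ := mem_intrinsicInterior.1 hx
  have hline (t : ℝ) : t • ((x' : F) - y) + x' ∈ affineSpan ℝ s :=
    AffineSubspace.smul_vsub_vadd_mem _ t x'.2 (subset_affineSpan ℝ s hy) x'.2
  let c : ℝ → affineSpan ℝ s := fun t => ⟨t • ((x' : F) - y) + x', hline t⟩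
  have hc : Continuous c := by fun_prop
  have hc0 : c 0 = x' := by ext; simp [c]
  obtain ⟨ε, hε, hball⟩ := Metric.isOpen_iff.1 (isOpen_interior.preimage hc) 0
    (by simpa [hc0] using hx')
  have hε2 : ε / 2 ∈ Metric.ball (0 : ℝ) ε := by
    rw [mem_ball_zero_iff, Real.norm_of_nonneg (by positivity)]
    linarith
  have hp : (c (ε / 2) : F) ∈ s := interior_subset (s := Subtype.val ⁻¹' s) (hball hε2)
  refine ⟨c (ε / 2), hp, ε / 2 / (1 + ε / 2), 1 / (1 + ε / 2),
    by positivity, by positivity, by field_simp; ring, ?_⟩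
  have : 1 + ε / 2 ≠ 0 := by positivity
  simp only [c]
  match_scalars <;> field_simp <;> ring

theorem mem_intrinsicInterior_of_isOpen {s O : Set F} (hO : IsOpen O)
    (hOs : O ∩ affineSpan ℝ s ⊆ s) {z : F} (hzO : z ∈ O) (hz : z ∈ affineSpan ℝ s) :
    z ∈ intrinsicInterior ℝ s :=
  mem_intrinsicInterior.2 ⟨⟨z, hz⟩,
    interior_maximal (fun (y : affineSpan ℝ s) hy => hOs ⟨hy, y.2⟩)
      (hO.preimage continuous_subtype_val) hzO, rfl⟩

theorem intrinsicInterior_coe_submodule (S : Submodule ℝ F) :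
    intrinsicInterior ℝ (S : Set F) = S := by
  refine intrinsicInterior_subset.antisymm fun z hz =>
    mem_intrinsicInterior_of_isOpen isOpen_univ (fun x hx => ?_) trivial (subset_affineSpan ℝ _ hz)
  simpa using affineSpan_subset_span hx.2

theorem IsExtreme.eq_of_mem_intrinsicInterior {C T : Set F} {z : F} (hT : IsExtreme ℝ C T)
    (hzT : z ∈ T) (hzC : z ∈ intrinsicInterior ℝ C) : T = C := by
  refine hT.1.antisymm fun p hp => ?_
  obtain ⟨q, hq, hz⟩ := exists_mem_openSegment_of_mem_intrinsicInterior hzC hp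
  exact hT.2 hp hq hzT hz

end IntrinsicInterior

section RayAddOrthogonal

open Module Submodule

variable {F : Type*} [NormedAddCommGroup F] [InnerProductSpace ℝ F] {L : Submodule ℝ F}
  {u q : F} {t : ℝ}

/-- The cone `pos(u) + Lᗮ`; for a unit vector `u ∈ L` it is the normal cone of the unit ball
of `L` at `u`. -/
def rayAddOrthogonal (L : Submodule ℝ F) (u : F) : Set F :=
  {w | ∃ s : ℝ, 0 ≤ s ∧ w - s • u ∈ Lᗮ}

theorem exists_eq_smul_add_of_notMem_orthogonal [L.HasOrthogonalProjection] {z : F}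
    (hz : z ∉ Lᗮ) : ∃ t : ℝ, 0 < t ∧ ∃ u, ‖u‖ = 1 ∧ u ∈ L ∧ ∃ q ∈ Lᗮ, z = t • u + q := by
  obtain ⟨p, hp, q, hq, rfl⟩ := L.exists_add_mem_mem_orthogonal z
  have hp0 : p ≠ 0 := by rintro rfl; exact hz (by simpa using hq)
  refine ⟨‖p‖, norm_pos_iff.2 hp0, ‖p‖⁻¹ • p, norm_smul_inv_norm hp0, L.smul_mem _ hp, q, hq, ?_⟩
  rw [smul_inv_smul₀ (norm_ne_zero_iff.2 hp0)]

theorem inf_orthogonal_span_smul_add (ht : t ≠ 0) (hq : q ∈ Lᗮ) :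
    L ⊓ (ℝ ∙ (t • u + q))ᗮ = L ⊓ (ℝ ∙ u)ᗮ := by
  ext w
  simp only [mem_inf, mem_orthogonal_singleton_iff_inner_right]
  refine and_congr_right fun hw => ?_
  rw [inner_add_left, real_inner_smul_left, inner_left_of_mem_orthogonal hw hq, add_zero]
  simp [ht]

theorem finrank_inf_orthogonal_span_singleton_add_one [FiniteDimensional ℝ F] {z : F}
    (hz : z ∉ Lᗮ) : finrank ℝ ↥(L ⊓ (ℝ ∙ z)ᗮ) + 1 = finrank ℝ L := by
  obtain ⟨t, ht, u, hu, huL, q, hq, rfl⟩ := exists_eq_smul_add_of_notMem_orthogonal hz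
  have hu0 : u ≠ 0 := by rintro rfl; simp at hu
  have h := finrank_add_inf_finrank_orthogonal ((span_singleton_le_iff_mem _ _).2 huL)
  rw [finrank_span_singleton hu0, inf_comm] at h
  rw [inf_orthogonal_span_smul_add ht.ne' hq]
  omega

theorem inner_smul_add_of_mem_orthogonal (hu : ‖u‖ = 1) (huL : u ∈ L) (s : ℝ) (hq : q ∈ Lᗮ) :
    ⟪u, s • u + q⟫_ℝ = s := by
  rw [inner_add_right, real_inner_smul_right, real_inner_self_eq_norm_sq, hu,
    inner_right_of_mem_orthogonal huL hq]
  ring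

theorem smul_add_mem_intrinsicInterior_rayAddOrthogonal (ht : 0 < t) (hu : ‖u‖ = 1) (huL : u ∈ L)
    (hq : q ∈ Lᗮ) :
    t • u + q ∈ intrinsicInterior ℝ (rayAddOrthogonal L u) := by
  have hspan : span ℝ (rayAddOrthogonal L u) ≤ (ℝ ∙ u) ⊔ Lᗮ := by
    refine span_le.2 fun w ⟨s, _, hw⟩ => ?_
    rw [← add_sub_cancel (s • u) w]
    exact add_mem_sup (smul_mem _ s (mem_span_singleton_self u)) hw
  refine mem_intrinsicInterior_of_isOpen (O := {x | 0 < ⟪u, x⟫_ℝ})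
    (isOpen_lt continuous_const (continuous_const.inner continuous_id)) ?_ ?_
    (subset_affineSpan ℝ _ ⟨t, ht.le, by simpa using hq⟩)
  · rintro x ⟨hux, hx⟩
    obtain ⟨y, hy, v, hv, rfl⟩ := mem_sup.1 (hspan (affineSpan_subset_span hx))
    obtain ⟨a, rfl⟩ := mem_span_singleton.1 hy
    rw [mem_ofPred_eq, inner_smul_add_of_mem_orthogonal hu huL a hv] at hux
    exact ⟨a, hux.le, by simpa using hv⟩
  · simpa [mem_ofPred_eq, inner_smul_add_of_mem_orthogonal hu huL t hq] using ht

theorem orthogonal_rayAddOrthogonal [L.HasOrthogonalProjection] :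
    {w | ∀ v ∈ rayAddOrthogonal L u, ⟪v, w⟫_ℝ = 0} =
      (L ⊓ (ℝ ∙ u)ᗮ : Submodule ℝ F) := by
  ext w
  constructor
  · intro hw
    have hwL : w ∈ Lᗮᗮ := fun v hv => hw v ⟨0, le_rfl, by simpa using hv⟩
    rw [orthogonal_orthogonal] at hwL
    exact ⟨hwL, mem_orthogonal_singleton_iff_inner_right.2 (hw u ⟨1, zero_le_one, by simp⟩)⟩
  · rintro ⟨hwL, hwu⟩ v ⟨s, -, hv⟩
    rw [← add_sub_cancel (s • u) v, inner_add_left, real_inner_smul_left,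
      mem_orthogonal_singleton_iff_inner_right.1 hwu, inner_left_of_mem_orthogonal hwL hv]
    ring

end RayAddOrthogonal

theorem eq_or_eq_neg_of_mem_span_singleton {F : Type*} [NormedAddCommGroup F] [NormedSpace ℝ F]
    {e z : F} (he : ‖e‖ = 1) (hz : ‖z‖ = 1) (h : z ∈ ℝ ∙ e) : z = e ∨ z = -e := by
  obtain ⟨c, rfl⟩ := Submodule.mem_span_singleton.1 h
  rw [norm_smul, he, mul_one, Real.norm_eq_abs] at hz
  rcases abs_eq zero_le_one |>.1 hz with rfl | rfl <;> simp

section EuclideanSpace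

open Module Submodule

local notation:max "ℝ^" n:max => EuclideanSpace ℝ (Fin n)

variable {n : ℕ}

section TouchingSpace

variable {K : ConvexBody ℝ^n} {z w : ℝ^n}

theorem smul_mem_TSset (c : ℝ) (hw : w ∈ TSset K z) : c • w ∈ TSset K z := by
  obtain ⟨T, hT, hTw⟩ := hw
  exact ⟨T, hT, fun v hv => by rw [real_inner_smul_right, hTw v hv, mul_zero]⟩

theorem TSset_subset_orthogonal : TSset K z ⊆ (ℝ ∙ z)ᗮ := fun _ ⟨_, hT, hTw⟩ =>
  mem_orthogonal_singleton_iff_inner_right.2 (hTw z (intrinsicInterior_subset hT.2))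

/-- The normal cone is then itself the touching cone. -/
theorem TSset_eq_of_mem_intrinsicInterior
    (hz : z ∈ intrinsicInterior ℝ (normalConeFace K (suppSet K z))) :
    TSset K z = {w | ∀ v ∈ normalConeFace K (suppSet K z), ⟪v, w⟫_ℝ = 0} := by
  ext w
  constructor
  · rintro ⟨T, hT, hTw⟩
    rwa [← hT.1.eq_of_mem_intrinsicInterior (intrinsicInterior_subset hT.2) hz]
  · exact fun hw => ⟨_, ⟨IsExtreme.refl ℝ _, hz⟩, hw⟩

theorem suppSet_eq_of_isGreatest {c : ℝ}
    (h : IsGreatest ((fun y => ⟪z, y⟫_ℝ) '' (K : Set ℝ^n)) c) :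
    suppSet K z = {x | x ∈ K ∧ ⟪x, z⟫_ℝ = c} := by
  simp [suppSet, supportFn, h.csSup_eq]

theorem normalConeFace_singleton (x : ℝ^n) : normalConeFace K {x} = normalConeAt K x := by
  simp [normalConeFace, intrinsicInterior_singleton]

theorem isExtremeNormal_iff {m : ℕ} {C : Fin m → ConvexBody ℝ^n} :
    IsExtremeNormal C z ↔ ∃ w : Fin m → ℝ^n, LinearIndependent ℝ w ∧ ∀ i, w i ∈ TSset (C i) z := by
  constructor
  · rintro ⟨w, hw, hli⟩
    exact ⟨w, hli, fun i => (hw i).2⟩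
  · rintro ⟨w, hli, hw⟩
    have hw0 i : w i ≠ 0 := hli.ne_zero i
    refine ⟨fun i => ‖w i‖⁻¹ • w i, fun i => ⟨norm_smul_inv_norm (hw0 i), smul_mem_TSset _ (hw i)⟩,
      hli.units_smul fun i => Units.mk0 _ (inv_ne_zero (norm_ne_zero_iff.2 (hw0 i)))⟩

end TouchingSpace

section BallIn

variable {L : Submodule ℝ ℝ^n} {x z : ℝ^n}

theorem mem_ballIn : x ∈ ballIn L ↔ ‖x‖ ≤ 1 ∧ x ∈ L := by
  show x ∈ closedBall (0 : ℝ^n) 1 ∩ (L : Set ℝ^n) ↔ _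
  rw [mem_inter_iff, mem_closedBall_zero_iff, SetLike.mem_coe]

theorem zero_mem_intrinsicInterior_ballIn :
    (0 : ℝ^n) ∈ intrinsicInterior ℝ (ballIn L : Set ℝ^n) := by
  have h0 : (0 : ℝ^n) ∈ ballIn L := mem_ballIn.2 ⟨by simp, L.zero_mem⟩
  refine mem_intrinsicInterior_of_isOpen isOpen_ball (fun y ⟨hy, hyB⟩ => ?_)
    (mem_ball_self one_pos) (subset_affineSpan ℝ _ h0)
  have hBL : span ℝ (ballIn L : Set ℝ^n) ≤ L := span_le.2 fun y hy => (mem_ballIn.1 hy).2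
  exact mem_ballIn.2 ⟨(mem_ball_zero_iff.1 hy).le, hBL (affineSpan_subset_span hyB)⟩

theorem suppSet_ballIn_of_mem_orthogonal (hz : z ∈ Lᗮ) : suppSet (ballIn L) z = ballIn L := by
  have hzB : ∀ y ∈ ballIn L, ⟪y, z⟫_ℝ = 0 := fun y hy =>
    inner_right_of_mem_orthogonal (mem_ballIn.1 hy).2 hz
  have hmax : IsGreatest ((fun y => ⟪z, y⟫_ℝ) '' (ballIn L : Set ℝ^n)) 0 :=
    ⟨⟨0, mem_ballIn.2 ⟨by simp, L.zero_mem⟩, inner_zero_right z⟩,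
      by rintro _ ⟨y, hy, rfl⟩; exact (real_inner_comm y z ▸ hzB y hy).le⟩
  ext y
  rw [suppSet_eq_of_isGreatest hmax]
  exact ⟨fun h => h.1, fun hy => ⟨hy, hzB y hy⟩⟩

theorem normalConeFace_ballIn_self :
    normalConeFace (ballIn L) (ballIn L) = (Lᗮ : Set ℝ^n) := by
  ext w
  constructor
  · intro hw
    refine (mem_orthogonal' _ _).2 fun y hyL => ?_
    -- `w` is normal at the relative interior point `0`, so `⟪w, ±c • y⟫ ≤ 0` for small `c > 0`
    have hc : 0 < (‖y‖ + 1)⁻¹ := by positivity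
    have hcy : ∀ s : ℝ, |s| = 1 → s • (‖y‖ + 1)⁻¹ • y ∈ ballIn L := fun s hs => by
      refine mem_ballIn.2 ⟨?_, L.smul_mem _ (L.smul_mem _ hyL)⟩
      rw [norm_smul, norm_smul, Real.norm_eq_abs, hs, Real.norm_of_nonneg hc.le, one_mul,
        inv_mul_le_one₀ (by positivity)]
      linarith
    have h0 := hw 0 zero_mem_intrinsicInterior_ballIn
    have h1 := h0 _ (hcy 1 (by simp))
    have h2 := h0 _ (hcy (-1) (by simp))
    simp only [inner_zero_right, real_inner_smul_right] at h1 h2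
    nlinarith
  · intro hw x hx y hy
    rw [SetLike.mem_coe] at hw
    rw [inner_left_of_mem_orthogonal (mem_ballIn.1 hy).2 hw,
      inner_left_of_mem_orthogonal (mem_ballIn.1 (intrinsicInterior_subset hx)).2 hw]

theorem TSset_ballIn_of_mem_orthogonal (hz : z ∈ Lᗮ) : TSset (ballIn L) z = L := by
  have hN : normalConeFace (ballIn L) (suppSet (ballIn L) z) = (Lᗮ : Set ℝ^n) := by
    rw [suppSet_ballIn_of_mem_orthogonal hz, normalConeFace_ballIn_self]
  rw [TSset_eq_of_mem_intrinsicInterior (by rwa [hN, intrinsicInterior_coe_submodule]), hN]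
  ext w
  rw [← L.orthogonal_orthogonal, SetLike.mem_coe, mem_orthogonal, L.orthogonal_orthogonal]
  rfl

theorem normalConeAt_ballIn_of_norm_eq_one {u : ℝ^n} (hu : ‖u‖ = 1) (huL : u ∈ L) :
    normalConeAt (ballIn L) u = rayAddOrthogonal L u := by
  ext w
  constructor
  · intro hw
    obtain ⟨p, hp, q, hq, rfl⟩ := L.exists_add_mem_mem_orthogonal w
    rcases eq_or_ne p 0 with rfl | hp0
    · exact ⟨0, le_rfl, by simpa using hq⟩
    have hpy : ∀ y ∈ L, ⟪p + q, y⟫_ℝ = ⟪p, y⟫_ℝ := fun y hy => by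
      rw [inner_add_left, inner_left_of_mem_orthogonal hy hq, add_zero]
    -- testing against `p / ‖p‖` forces equality in Cauchy–Schwarz for `⟪p, u⟫`
    have hp1 : ‖p‖⁻¹ • p ∈ ballIn L := mem_ballIn.2 ⟨(norm_smul_inv_norm hp0).le, L.smul_mem _ hp⟩
    have h := hw _ hp1
    rw [hpy _ (mem_ballIn.1 hp1).2, hpy u huL, real_inner_smul_right,
      real_inner_self_eq_norm_sq] at h
    have hpu : ⟪p, u⟫_ℝ = ‖p‖ * ‖u‖ := by
      refine le_antisymm (real_inner_le_norm p u) ?_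
      calc ‖p‖ * ‖u‖ = ‖p‖⁻¹ * ‖p‖ ^ 2 := by rw [hu]; field_simp
        _ ≤ _ := h
    have hpu' := inner_eq_norm_mul_iff_real.1 hpu
    rw [hu, one_smul] at hpu'
    exact ⟨‖p‖, norm_nonneg p, by rwa [add_sub_right_comm, ← hpu', sub_self, zero_add]⟩
  · rintro ⟨s, hs, hw⟩ y hy
    obtain ⟨hy1, hyL⟩ := mem_ballIn.1 hy
    rw [← add_sub_cancel (s • u) w, inner_add_left, inner_add_left,
      inner_left_of_mem_orthogonal hyL hw, inner_left_of_mem_orthogonal huL hw,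
      real_inner_smul_left, real_inner_smul_left, real_inner_self_eq_norm_sq, hu]
    have huy : ⟪u, y⟫_ℝ ≤ 1 := (real_inner_le_norm u y).trans (by rwa [hu, one_mul])
    nlinarith

theorem suppSet_ballIn_smul_add {u q : ℝ^n} {t : ℝ} (ht : 0 < t) (hu : ‖u‖ = 1) (huL : u ∈ L)
    (hq : q ∈ Lᗮ) : suppSet (ballIn L) (t • u + q) = {u} := by
  have hzy : ∀ y ∈ L, ⟪y, t • u + q⟫_ℝ = t * ⟪y, u⟫_ℝ := fun y hy => by
    rw [inner_add_right, inner_right_of_mem_orthogonal hy hq, real_inner_smul_right, add_zero]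
  have hle : ∀ y ∈ ballIn L, ⟪y, u⟫_ℝ ≤ 1 := fun y hy =>
    (real_inner_le_norm y u).trans (by rw [hu, mul_one]; exact (mem_ballIn.1 hy).1)
  have huB : u ∈ ballIn L := mem_ballIn.2 ⟨hu.le, huL⟩
  have huu : ⟪u, u⟫_ℝ = 1 := by rw [real_inner_self_eq_norm_sq, hu, one_pow]
  have hmax : IsGreatest ((fun y => ⟪t • u + q, y⟫_ℝ) '' (ballIn L : Set ℝ^n)) t := by
    refine ⟨⟨u, huB, show ⟪_, u⟫_ℝ = t by rw [real_inner_comm, hzy u huL, huu, mul_one]⟩, ?_⟩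
    rintro _ ⟨y, hy, rfl⟩
    show ⟪_, y⟫_ℝ ≤ t
    rw [real_inner_comm, hzy y (mem_ballIn.1 hy).2]
    nlinarith [hle y hy]
  ext y
  rw [suppSet_eq_of_isGreatest hmax, mem_singleton_iff]
  constructor
  · rintro ⟨hy, hyz⟩
    obtain ⟨hy1, hyL⟩ := mem_ballIn.1 hy
    rw [hzy y hyL, mul_eq_left₀ ht.ne'] at hyz
    -- `⟪y, u⟫ = 1` with `‖y‖ ≤ 1` is the equality case of Cauchy–Schwarz
    have hy1' : ‖y‖ = 1 := le_antisymm hy1 (by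
      simpa [hu, hyz] using real_inner_le_norm y u)
    exact (inner_eq_one_iff_of_norm_eq_one hy1' hu).1 hyz
  · intro hyu
    rw [hyu]
    exact ⟨huB, by rw [hzy u huL, huu, mul_one]⟩

theorem TSset_ballIn_of_notMem_orthogonal (hz : z ∉ Lᗮ) :
    TSset (ballIn L) z = (L ⊓ (ℝ ∙ z)ᗮ : Submodule ℝ ℝ^n) := by
  obtain ⟨t, ht, u, hu, huL, q, hq, rfl⟩ := exists_eq_smul_add_of_notMem_orthogonal hz
  have hN : normalConeFace (ballIn L) (suppSet (ballIn L) (t • u + q)) = rayAddOrthogonal L u := by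
    rw [suppSet_ballIn_smul_add ht hu huL hq, normalConeFace_singleton,
      normalConeAt_ballIn_of_norm_eq_one hu huL]
  rw [TSset_eq_of_mem_intrinsicInterior
      (hN ▸ smul_add_mem_intrinsicInterior_rayAddOrthogonal ht hu huL hq),
    hN, orthogonal_rayAddOrthogonal, inf_orthogonal_span_smul_add ht.ne' hq]

end BallIn

section Extremality

variable {j m : ℕ} {K : ConvexBody ℝ^n} {z : ℝ^n}

theorem isExtremeNormal_ite_iff {B : ConvexBody ℝ^n} {M : Submodule ℝ ℝ^n}
    (hB : TSset B z = M) (hjm : j ≤ m) :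
    IsExtremeNormal (fun i : Fin m => if (i : ℕ) < j then K else B) z ↔
      ∃ a : Fin j → ℝ^n, LinearIndependent ℝ a ∧ (∀ i, a i ∈ TSset K z) ∧
        finrank ℝ ↥(M ⊓ span ℝ (range a)) + (m - j) ≤ finrank ℝ M := by
  simp only [isExtremeNormal_iff, apply_ite (TSset · z), hB]
  rw [exists_linearIndependent_fin_ite_iff hjm]
  simp only [SetLike.mem_coe, exists_linearIndependent_disjoint_iff]

theorem isExtremeNormal_ite_ballIn_iff_of_notMem_orthogonal {L : Submodule ℝ ℝ^n}
    (hz : z ∉ Lᗮ) (hj : 1 ≤ j) (hjm : j ≤ m) (hL : finrank ℝ L = m) :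
    IsExtremeNormal (fun i : Fin m => if (i : ℕ) < j then K else ballIn L) z ↔
      j ≤ dimTS K z ∧ ¬ TSset K z ⊆ L := by
  have hM := finrank_inf_orthogonal_span_singleton_add_one hz
  rw [isExtremeNormal_ite_iff (TSset_ballIn_of_notMem_orthogonal hz) hjm, dimTS,
    ← exists_linearIndependent_fin_mem_notMem_iff hj]
  refine exists_congr fun a => and_congr_right fun ha => and_congr_right fun haS => ?_
  have hnotMem : (∃ i, a i ∉ L) ↔ ¬ span ℝ (range a) ≤ L ⊓ (ℝ ∙ z)ᗮ := by
    simp [span_le, range_subset_iff, fun i => TSset_subset_orthogonal (haS i)]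
  rw [hnotMem, ← finrank_inf_lt_iff, finrank_span_eq_card ha, Fintype.card_fin]
  omega

theorem isExtremeNormal_ite_ballIn_orthogonal_iff (hjm : j ≤ m)
    (hm : finrank ℝ (ℝ ∙ z)ᗮ = m) :
    IsExtremeNormal (fun i : Fin m => if (i : ℕ) < j then K else ballIn (ℝ ∙ z)ᗮ) z ↔
      j ≤ dimTS K z := by
  have hz : z ∈ (ℝ ∙ z)ᗮᗮ := by rw [orthogonal_orthogonal]; exact mem_span_singleton_self z
  rw [isExtremeNormal_ite_iff (TSset_ballIn_of_mem_orthogonal hz) hjm, dimTS,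
    ← exists_linearIndependent_fin_mem_iff]
  refine exists_congr fun a => and_congr_right fun ha => and_iff_left_of_imp fun haS => ?_
  rw [inf_eq_right.2 (span_le.2 (range_subset_iff.2 fun i => TSset_subset_orthogonal (haS i))),
    finrank_span_eq_card ha, Fintype.card_fin]
  omega

end Extremality

end EuclideanSpace

/-- characterization of `(K[j], B_L^{n−1}[n−1−j])`-extreme unit normal vectors,
for `1 ≤ j ≤ n−2`: for `z ∉ {±eₙ}` extremality is equivalent to `dim TS(K,z) ≥ j` and
`TS(K,z) ⊄ L`; for `z ∈ {±eₙ}` it is equivalent to `dim TS(K,z) ≥ j`. -/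
theorem extreme_iff_dimTS {n j : ℕ} (hn : 2 ≤ n) (hj : 1 ≤ j) (hjn : j ≤ n - 2)
    (K : ConvexBody (EuclideanSpace ℝ (Fin n)))
    (z : EuclideanSpace ℝ (Fin n)) (hz : ‖z‖ = 1) :
    (z ≠ lastVec n (by omega) ∧ z ≠ -lastVec n (by omega) →
      (IsExtremeNormal
          (fun i : Fin (n - 1) => if (i : ℕ) < j then K
            else ballIn (Submodule.span ℝ {lastVec n (by omega)})ᗮ) z
        ↔ (j ≤ dimTS K z ∧
            ¬ TSset K z ⊆
              ((Submodule.span ℝ {lastVec n (by omega)})ᗮ : Set (EuclideanSpace ℝ (Fin n)))))) ∧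
    (z = lastVec n (by omega) ∨ z = -lastVec n (by omega) →
      (IsExtremeNormal
          (fun i : Fin (n - 1) => if (i : ℕ) < j then K
            else ballIn (Submodule.span ℝ {lastVec n (by omega)})ᗮ) z
        ↔ j ≤ dimTS K z)) := by
  set e := lastVec n (by omega)
  have he : ‖e‖ = 1 := by simp [e, lastVec]
  have hL : Module.finrank ℝ (ℝ ∙ e)ᗮ = n - 1 := by
    have h := (ℝ ∙ e).finrank_add_finrank_orthogonal
    rw [finrank_span_singleton (norm_ne_zero_iff.1 (he ▸ one_ne_zero)),
      finrank_euclideanSpace_fin] at h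
    omega
  refine ⟨fun ⟨hze, hzne⟩ => ?_, fun hze => ?_⟩
  · refine isExtremeNormal_ite_ballIn_iff_of_notMem_orthogonal ?_ hj (by omega) hL
    rw [Submodule.orthogonal_orthogonal]
    exact fun h => (eq_or_eq_neg_of_mem_span_singleton he hz h).elim hze hzne
  · have hspan : ℝ ∙ z = ℝ ∙ e := by
      rcases hze with rfl | rfl
      · rfl
      · rw [← Set.neg_singleton, Submodule.span_neg]
    rw [← hspan] at hL ⊢
    exact isExtremeNormal_ite_ballIn_orthogonal_iff (by omega) hL
end
end
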